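/- arXiv:1605.02098 — 7 statements merged into one kernel-verified Lean document; each statement's English description precedes it below -/
import Mathlib

section
/- Let G be a locally compact topological group equipped with a compatible right-invariant metric d (i.e. d induces the topology of G and d(gk,hk)=d(g,h) for all g,h,k ∈ G). Suppose there exist a group automorphism α : G → G and a real constant 0 < c < 1 such that d(α(g),α(h)) = c·d(g,h) for all g,h ∈ G. Then every closed ball in G is compact; in particular G is a proper metric space. -/
/-!
The inverse `α⁻¹` multiplies distances by `c⁻¹ > 1` and fixes `1`, so it maps the closed ball
`B(1, r)` onto `B(1, r / c)`. Starting from one compact ball around `1`, given by local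
compactness, its images under the powers of `α⁻¹` are compact balls around `1` of radii tending to
infinity, and every closed ball is a closed subset of one of them.
-/

open Function Metric Filter

theorem Metric.image_closedBall_of_dist_eq_mul {X Y : Type*} [PseudoMetricSpace X]
    [PseudoMetricSpace Y] {f : X → Y} (hf : Surjective f) {k : ℝ} (hk : 0 < k)
    (hdist : ∀ x y, dist (f x) (f y) = k * dist x y) (x : X) (r : ℝ) :
    f '' closedBall x r = closedBall (f x) (k * r) := by
  ext y
  obtain ⟨z, rfl⟩ := hf y
  constructor
  · rintro ⟨w, hw, hwz⟩
    rw [← hwz, mem_closedBall, hdist]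
    exact mul_le_mul_of_nonneg_left hw hk.le
  · intro hz
    rw [mem_closedBall, hdist, mul_le_mul_iff_right₀ hk] at hz
    exact ⟨z, hz, rfl⟩

theorem ProperSpace.of_dist_eq_mul_of_fixedPoint {X : Type*} [PseudoMetricSpace X]
    [WeaklyLocallyCompactSpace X] {f : X → X} (hf : Surjective f) {k : ℝ} (hk : 1 < k)
    (hdist : ∀ x y, dist (f x) (f y) = k * dist x y) {x₀ : X} (hx₀ : f x₀ = x₀) :
    ProperSpace X := by
  have hk₀ : 0 < k := zero_lt_one.trans hk
  have hcont : Continuous f :=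
    (LipschitzWith.of_dist_le_mul (K := ⟨k, hk₀.le⟩) fun x y => (hdist x y).le).continuous
  obtain ⟨ε, hε, hcompact⟩ := exists_isCompact_closedBall x₀
  have hcompact_pow : ∀ n : ℕ, IsCompact (closedBall x₀ (k ^ n * ε)) := by
    intro n
    induction n with
    | zero => simpa using hcompact
    | succ n ih =>
      have himage := ih.image hcont
      rwa [image_closedBall_of_dist_eq_mul hf hk₀ hdist, hx₀, ← mul_assoc, ← pow_succ'] at himage
  exact .of_seq_closedBall ((tendsto_pow_atTop_atTop_of_one_lt hk).atTop_mul_const hε)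
    (.of_forall hcompact_pow)

theorem closedBall_isCompact_of_contracting_automorphism_general
    {G : Type*} [Group G] [MetricSpace G] [LocallyCompactSpace G]
    (α : G ≃* G) (c : ℝ) (hc0 : 0 < c) (hc1 : c < 1)
    (hsim : ∀ g h : G, dist (α g) (α h) = c * dist g h) :
    (∀ (g : G) (r : ℝ), IsCompact (Metric.closedBall g r)) ∧ ProperSpace G := by
  have hsim_symm : ∀ g h : G, dist (α.symm g) (α.symm h) = c⁻¹ * dist g h := by
    intro g h
    rw [eq_inv_mul_iff_mul_eq₀ hc0.ne', ← hsim, α.apply_symm_apply, α.apply_symm_apply]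
  have : ProperSpace G := .of_dist_eq_mul_of_fixedPoint α.symm.surjective
    ((one_lt_inv₀ hc0).mpr hc1) hsim_symm (map_one α.symm)
  exact ⟨isCompact_closedBall, inferInstance⟩

/-- Let `G` be a locally compact topological group equipped with a
compatible right-invariant metric `d`. Suppose there exist a group automorphism
`α : G → G` and a constant `0 < c < 1` such that `d(α g, α h) = c * d(g, h)` for all
`g, h`. Then every closed ball in `G` is compact; in particular `G` is a proper
metric space. -/
theorem closedBall_isCompact_of_contracting_automorphism
    {G : Type*} [Group G] [MetricSpace G] [IsTopologicalGroup G] [LocallyCompactSpace G]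
    (hright : ∀ g h k : G, dist (g * k) (h * k) = dist g h)
    (α : G ≃* G) (c : ℝ) (hc0 : 0 < c) (hc1 : c < 1)
    (hsim : ∀ g h : G, dist (α g) (α h) = c * dist g h) :
    (∀ (g : G) (r : ℝ), IsCompact (Metric.closedBall g r)) ∧ ProperSpace G :=
  closedBall_isCompact_of_contracting_automorphism_general α c hc0 hc1 hsim
end

section
/- Let G be a locally compact topological group equipped with a compatible right-invariant metric d (i.e. d induces the topology of G and d(gk,hk)=d(g,h) for all g,h,k ∈ G). Suppose there exist a group automorphism α : G → G and a real constant 0 < c < 1 such that d(α(g),α(h)) = c·d(g,h) for all g,h ∈ G. Then G is a doubling metric space: there exists an integer N such that every closed ball B(g,r) in G can be covered by at most N closed balls of radius r/2. -/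
/-!
Fix a compact closed ball `B(1, R)` and cover it by finitely many balls of radius `c R / 2`.
For `m : ℤ`, the map `x ↦ αᵐ(x) g` scales distances by `cᵐ` and sends `1` to `g`, so it carries
this cover onto a cover of `B(g, cᵐ R)` by the same number of balls of radius `cᵐ⁺¹ R / 2`.
Every radius `r > 0` satisfies `cᵐ⁺¹ R < r ≤ cᵐ R` for some `m`.
-/

open Metric Set

theorem dist_zpow_smul_smul {H X : Type*} [Group H] [MulAction H X] [PseudoMetricSpace X]
    {a : H} {c : ℝ} (hc : c ≠ 0) (h : ∀ x y : X, dist (a • x) (a • y) = c * dist x y)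
    (m : ℤ) (x y : X) : dist ((a ^ m) • x) ((a ^ m) • y) = c ^ m * dist x y := by
  induction m using Int.induction_on generalizing x y with
  | zero => simp
  | succ n ih => rw [zpow_add_one, mul_smul, mul_smul, ih, h, zpow_add_one₀ hc, mul_assoc]
  | pred n ih =>
    have hinv : dist (a⁻¹ • x) (a⁻¹ • y) = c⁻¹ * dist x y := by
      rw [eq_inv_mul_iff_mul_eq₀ hc, ← h, smul_inv_smul, smul_inv_smul]
    rw [zpow_sub_one, mul_smul, mul_smul, ih, hinv, zpow_sub_one₀ hc, mul_assoc]

theorem closedBall_subset_biUnion_image_of_dist_eq {X Y : Type*} [PseudoMetricSpace X]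
    [PseudoMetricSpace Y] [DecidableEq Y] {f : X → Y} (hf : Function.Surjective f) {k : ℝ}
    (hk : 0 < k) (hdist : ∀ x y, dist (f x) (f y) = k * dist x y) {x : X} {R ρ : ℝ} {t : Finset X}
    (ht : closedBall x R ⊆ ⋃ y ∈ t, closedBall y ρ) :
    closedBall (f x) (k * R) ⊆ ⋃ y ∈ t.image f, closedBall y (k * ρ) := by
  intro z hz
  obtain ⟨w, rfl⟩ := hf z
  have hw : w ∈ closedBall x R := by
    rw [mem_closedBall, hdist] at hz
    exact le_of_mul_le_mul_left hz hk
  obtain ⟨y, hy, hwy⟩ := mem_iUnion₂.mp (ht hw)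
  refine mem_iUnion₂.mpr ⟨f y, Finset.mem_image_of_mem f hy, ?_⟩
  rw [mem_closedBall, hdist]
  exact mul_le_mul_of_nonneg_left hwy hk.le

theorem exists_zpow_mul_lt_le {c R r : ℝ} (hc0 : 0 < c) (hc1 : c < 1) (hR : 0 < R)
    (hr : 0 < r) : ∃ m : ℤ, c ^ (m + 1) * R < r ∧ r ≤ c ^ m * R := by
  obtain ⟨n, hn_lt, hn_le⟩ := exists_mem_Ioc_zpow (div_pos hr hR) (one_lt_inv₀ hc0 |>.mpr hc1)
  refine ⟨-(n + 1), ?_, ?_⟩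
  · rw [show -(n + 1) + 1 = -n by ring, zpow_neg, ← inv_zpow, ← lt_div_iff₀ hR]
    exact hn_lt
  · rw [zpow_neg, ← inv_zpow, ← div_le_iff₀ hR]
    exact hn_le

theorem doubling_of_contracting_automorphism_general
    {G : Type*} [Group G] [MetricSpace G] [LocallyCompactSpace G]
    (hright : ∀ g h k : G, dist (g * k) (h * k) = dist g h)
    (α : G ≃* G) (c : ℝ) (hc0 : 0 < c) (hc1 : c < 1)
    (hsim : ∀ g h : G, dist (α g) (α h) = c * dist g h) :
    ∃ N : ℕ, ∀ (g : G) (r : ℝ), ∃ s : Finset G,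
      s.card ≤ N ∧ Metric.closedBall g r ⊆ ⋃ y ∈ s, Metric.closedBall y (r / 2) := by
  classical
  let β : MulAut G := α
  have hβ : ∀ (m : ℤ) (x y : G), dist ((β ^ m) x) ((β ^ m) y) = c ^ m * dist x y :=
    dist_zpow_smul_smul (a := β) hc0.ne' hsim
  obtain ⟨R, hR, hRc⟩ := exists_isCompact_closedBall (1 : G)
  obtain ⟨t, -, ht⟩ := hRc.elim_nhds_subcover (fun y => closedBall y (c * R / 2))
    fun y _ => closedBall_mem_nhds y (by positivity)
  refine ⟨t.card + 1, fun g r => ?_⟩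
  rcases le_or_gt r 0 with hr | hr
  · exact ⟨{g}, by simp, by simpa using closedBall_subset_closedBall (by linarith)⟩
  obtain ⟨m, hm_lt, hm_le⟩ := exists_zpow_mul_lt_le hc0 hc1 hR hr
  let f : G → G := fun x => (β ^ m) x * g
  have hf : ∀ x y, dist (f x) (f y) = c ^ m * dist x y := fun x y =>
    (hright _ _ _).trans (hβ m x y)
  have hf_surj : Function.Surjective f := fun z => ⟨(β ^ m).symm (z * g⁻¹), by simp [f]⟩
  have hf_one : f 1 = g := by simp [f]
  refine ⟨t.image f, Finset.card_image_le.trans (Nat.le_succ _), ?_⟩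
  calc closedBall g r ⊆ closedBall (f 1) (c ^ m * R) := by
        rw [hf_one]; exact closedBall_subset_closedBall hm_le
    _ ⊆ ⋃ y ∈ t.image f, closedBall y (c ^ m * (c * R / 2)) :=
        closedBall_subset_biUnion_image_of_dist_eq hf_surj (zpow_pos hc0 m) hf ht
    _ ⊆ ⋃ y ∈ t.image f, closedBall y (r / 2) := by
        refine iUnion₂_mono fun _ _ => closedBall_subset_closedBall ?_
        rw [zpow_add_one₀ hc0.ne'] at hm_lt
        linarith

/-- Let `G` be a locally compact topological group equipped with a
compatible right-invariant metric `d`, admitting a group automorphism which is a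
similarity with ratio `0 < c < 1`. Then `G` is a doubling metric space: there is an
integer `N` such that every closed ball of radius `r` can be covered by at most `N`
closed balls of radius `r/2`. -/
theorem doubling_of_contracting_automorphism
    {G : Type*} [Group G] [MetricSpace G] [IsTopologicalGroup G] [LocallyCompactSpace G]
    (hright : ∀ g h k : G, dist (g * k) (h * k) = dist g h)
    (α : G ≃* G) (c : ℝ) (hc0 : 0 < c) (hc1 : c < 1)
    (hsim : ∀ g h : G, dist (α g) (α h) = c * dist g h) :
    ∃ N : ℕ, ∀ (g : G) (r : ℝ), ∃ s : Finset G,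
      s.card ≤ N ∧ Metric.closedBall g r ⊆ ⋃ y ∈ s, Metric.closedBall y (r / 2) :=
  doubling_of_contracting_automorphism_general hright α c hc0 hc1 hsim
end

section
/- Let Y be a doubling metric space. Then there exists a finite constant D such that for every Borel probability measure μ on Y and μ-almost every y ∈ Y, the lower pointwise dimension of μ at y satisfies liminf_{ρ→0⁺} log μ(B(y,ρ))/log ρ ≤ D. -/
/-!
Where the lower pointwise dimension of `μ` exceeds `D`, one has `μ (B(a, ρ)) ≤ ρ ^ D` for all
`ρ ≤ ε`, for some `ε > 0`; so it suffices to show that a set `A` on which this holds with a fixed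
`ε` is null. In an `N`-doubling space a ball of radius `R` is covered by `N ^ j` balls of radius
`R / 2 ^ j`; each of them that meets `A` lies in a ball of radius `2 R / 2 ^ j` centred in `A`,
so `μ (A ∩ B(y, R)) ≤ (2 R) ^ D (N / 2 ^ D) ^ j`, which tends to `0` once `2 ^ D > N`.
-/

open MeasureTheory Filter Topology

/-- The lower pointwise dimension of a measure `m` at a point `w`:
`liminf_{ρ → 0⁺} log m(B(w,ρ)) / log ρ`, where `B(w,ρ)` is the closed ball. -/
noncomputable def lowerPointwiseDim {W : Type*} [MetricSpace W] [MeasurableSpace W]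
    (m : Measure W) (w : W) : ℝ :=
  liminf (fun ρ : ℝ => Real.log (m (Metric.closedBall w ρ)).toReal / Real.log ρ)
    (𝓝[>] (0 : ℝ))

open Metric Set
open scoped ENNReal

def IsDoublingWith (N : ℕ) (Y : Type*) [PseudoMetricSpace Y] : Prop :=
  ∀ (y : Y) (r : ℝ), ∃ s : Finset Y, s.card ≤ N ∧ closedBall y r ⊆ ⋃ z ∈ s, closedBall z (r / 2)

section Covering

variable {Y : Type*} [PseudoMetricSpace Y]

theorem IsDoublingWith.exists_finset_card_le_pow {N : ℕ} (hY : IsDoublingWith N Y) (j : ℕ)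
    (y : Y) (r : ℝ) :
    ∃ s : Finset Y, s.card ≤ N ^ j ∧ closedBall y r ⊆ ⋃ z ∈ s, closedBall z (r / 2 ^ j) := by
  classical
  induction j generalizing y r with
  | zero => exact ⟨{y}, by simp, by simp⟩
  | succ j ih =>
    obtain ⟨s, hs, hys⟩ := ih y r
    choose t ht hzt using fun z : Y => hY z (r / 2 ^ j)
    refine ⟨s.biUnion t, ?_, ?_⟩
    · calc (s.biUnion t).card ≤ ∑ z ∈ s, (t z).card := Finset.card_biUnion_le
        _ ≤ ∑ _z ∈ s, N := Finset.sum_le_sum fun z _ => ht z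
        _ = s.card * N := by rw [Finset.sum_const, smul_eq_mul]
        _ ≤ N ^ j * N := Nat.mul_le_mul_right _ hs
        _ = N ^ (j + 1) := (pow_succ N j).symm
    · intro x hx
      obtain ⟨z, hz, hxz⟩ := mem_iUnion₂.1 (hys hx)
      obtain ⟨w, hw, hxw⟩ := mem_iUnion₂.1 (hzt z hxz)
      refine mem_iUnion₂.2 ⟨w, Finset.mem_biUnion.2 ⟨z, hz, hw⟩, ?_⟩
      rwa [pow_succ, ← div_div]

theorem measure_inter_le_card_mul_of_subset_biUnion_closedBall [MeasurableSpace Y]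
    (μ : Measure Y) {A B : Set Y} {s : Finset Y} {ρ : ℝ} {c : ℝ≥0∞}
    (hA : ∀ a ∈ A, μ (closedBall a (2 * ρ)) ≤ c) (hB : B ⊆ ⋃ z ∈ s, closedBall z ρ) :
    μ (A ∩ B) ≤ s.card * c := by
  have hpiece : ∀ z, μ (A ∩ closedBall z ρ) ≤ c := by
    intro z
    rcases (A ∩ closedBall z ρ).eq_empty_or_nonempty with h | ⟨a, ha, haz⟩
    · simp [h]
    · refine (measure_mono ?_).trans (hA a ha)
      refine inter_subset_right.trans (closedBall_subset_closedBall' ?_)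
      linarith [mem_closedBall'.1 haz]
  calc μ (A ∩ B) ≤ μ (⋃ z ∈ s, A ∩ closedBall z ρ) := by
        rw [← inter_iUnion₂]
        exact measure_mono (inter_subset_inter_right A hB)
    _ ≤ ∑ z ∈ s, μ (A ∩ closedBall z ρ) := measure_biUnion_finset_le s _
    _ ≤ ∑ _z ∈ s, c := Finset.sum_le_sum fun z _ => hpiece z
    _ = s.card * c := by rw [Finset.sum_const, nsmul_eq_mul]

end Covering

theorem tendsto_pow_mul_div_two_pow_rpow {N D r : ℝ} (hN : 0 ≤ N) (hD : N < 2 ^ D)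
    (hr : 0 ≤ r) :
    Tendsto (fun j : ℕ => N ^ j * (r / 2 ^ j) ^ D) atTop (𝓝 0) := by
  have hq : 0 ≤ N / 2 ^ D := by positivity
  have hq1 : N / 2 ^ D < 1 := (div_lt_one (by positivity)).2 hD
  have h := (tendsto_pow_atTop_nhds_zero_of_lt_one hq hq1).const_mul (r ^ D)
  rw [mul_zero] at h
  refine h.congr fun j => ?_
  rw [Real.div_rpow hr (by positivity), ← Real.rpow_pow_comm zero_le_two, div_pow]
  field_simp

section NullSet

variable {Y : Type*} [PseudoMetricSpace Y] [MeasurableSpace Y] {N : ℕ} {D : ℝ}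

theorem IsDoublingWith.measure_inter_closedBall_eq_zero (hY : IsDoublingWith N Y)
    (hD : (N : ℝ) < 2 ^ D) (μ : Measure Y) {A : Set Y} {ε : ℝ} (hε : 0 < ε)
    (hA : ∀ a ∈ A, ∀ ρ ∈ Ioc 0 ε, μ (closedBall a ρ) ≤ ENNReal.ofReal (ρ ^ D))
    (y : Y) {R : ℝ} (hR : 0 < R) :
    μ (A ∩ closedBall y R) = 0 := by
  have hlim : Tendsto (fun j : ℕ => ENNReal.ofReal (N ^ j * (2 * R / 2 ^ j) ^ D)) atTop (𝓝 0) := by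
    simpa using ENNReal.tendsto_ofReal
      (tendsto_pow_mul_div_two_pow_rpow N.cast_nonneg hD (by positivity : 0 ≤ 2 * R))
  have hradius : Tendsto (fun j : ℕ => 2 * (R / 2 ^ j)) atTop (𝓝 0) := by
    simpa using ((tendsto_const_nhds (x := R)).div_atTop
      (tendsto_pow_atTop_atTop_of_one_lt one_lt_two)).const_mul (2 : ℝ)
  refine le_antisymm (ge_of_tendsto hlim ?_) zero_le
  filter_upwards [hradius.eventually (eventually_le_nhds hε)] with j hj
  obtain ⟨s, hs, hcov⟩ := hY.exists_finset_card_le_pow j y R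
  calc μ (A ∩ closedBall y R) ≤ s.card * ENNReal.ofReal ((2 * (R / 2 ^ j)) ^ D) :=
        measure_inter_le_card_mul_of_subset_biUnion_closedBall μ
          (fun a ha => hA a ha _ ⟨by positivity, hj⟩) hcov
    _ ≤ N ^ j * ENNReal.ofReal ((2 * (R / 2 ^ j)) ^ D) := by gcongr; exact_mod_cast hs
    _ = ENNReal.ofReal (N ^ j * (2 * R / 2 ^ j) ^ D) := by
        rw [ENNReal.ofReal_mul (by positivity), ENNReal.ofReal_pow N.cast_nonneg,
          ENNReal.ofReal_natCast, mul_div_assoc]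

theorem IsDoublingWith.measure_setOf_forall_measure_closedBall_le_eq_zero
    (hY : IsDoublingWith N Y) (hD : (N : ℝ) < 2 ^ D) (μ : Measure Y) {ε : ℝ} (hε : 0 < ε) :
    μ {a | ∀ ρ ∈ Ioc 0 ε, μ (closedBall a ρ) ≤ ENNReal.ofReal (ρ ^ D)} = 0 := by
  rcases isEmpty_or_nonempty Y with hempty | ⟨⟨y⟩⟩
  · simp [eq_empty_of_isEmpty]
  refine measure_mono_null (fun a ha => ?_) (measure_iUnion_null fun n : ℕ =>
    hY.measure_inter_closedBall_eq_zero hD μ hε (fun a ha => ha) y (R := n + 1) (by positivity))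
  obtain ⟨n, hn⟩ := mem_iUnion.1 ((iUnion_ball_nat_succ y).ge (mem_univ a))
  exact mem_iUnion.2 ⟨n, ha, ball_subset_closedBall hn⟩

theorem IsDoublingWith.measure_setOf_eventually_measure_closedBall_le_eq_zero
    (hY : IsDoublingWith N Y) (hD : (N : ℝ) < 2 ^ D) (μ : Measure Y) :
    μ {a | ∀ᶠ ρ in 𝓝[>] 0, μ (closedBall a ρ) ≤ ENNReal.ofReal (ρ ^ D)} = 0 := by
  refine measure_mono_null (fun a ha => ?_) (measure_iUnion_null fun n : ℕ =>
    hY.measure_setOf_forall_measure_closedBall_le_eq_zero hD μ n.one_div_pos_of_nat)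
  obtain ⟨ε, hε, hsub⟩ := mem_nhdsGT_iff_exists_Ioc_subset.1 ha
  obtain ⟨n, hn⟩ := exists_nat_one_div_lt (mem_Ioi.1 hε)
  exact mem_iUnion.2 ⟨n, fun ρ hρ => hsub ⟨hρ.1, hρ.2.trans hn.le⟩⟩

end NullSet

theorem eventually_measure_closedBall_le_rpow_of_lt_lowerPointwiseDim {W : Type*}
    [MetricSpace W] [MeasurableSpace W] (μ : Measure W) [IsZeroOrProbabilityMeasure μ]
    {w : W} {D : ℝ} (h : D < lowerPointwiseDim μ w) :
    ∀ᶠ ρ in 𝓝[>] 0, μ (closedBall w ρ) ≤ ENNReal.ofReal (ρ ^ D) := by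
  have hunit : ∀ᶠ ρ in 𝓝[>] (0 : ℝ), ρ ∈ Ioo 0 1 := Ioo_mem_nhdsGT one_pos
  have hbdd : IsBoundedUnder (· ≥ ·) (𝓝[>] 0)
      fun ρ : ℝ => Real.log (μ (closedBall w ρ)).toReal / Real.log ρ := by
    refine ⟨0, eventually_map.2 ?_⟩
    filter_upwards [hunit] with ρ ⟨hρ0, hρ1⟩
    exact div_nonneg_of_nonpos (Real.log_nonpos ENNReal.toReal_nonneg measureReal_le_one)
      (Real.log_neg hρ0 hρ1).le
  filter_upwards [eventually_lt_of_lt_liminf h hbdd, hunit] with ρ hρD ⟨hρ0, hρ1⟩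
  rw [lt_div_iff_of_neg (Real.log_neg hρ0 hρ1)] at hρD
  rw [← ENNReal.ofReal_toReal (measure_ne_top μ _)]
  exact ENNReal.ofReal_le_ofReal (Real.lt_rpow_of_log_lt hρ0 hρD).le

theorem lowerPointwiseDim_le_of_doubling_general
    {Y : Type*} [MetricSpace Y] [MeasurableSpace Y]
    (hdoub : ∃ N : ℕ, ∀ (y : Y) (r : ℝ), ∃ s : Finset Y,
      s.card ≤ N ∧ Metric.closedBall y r ⊆ ⋃ z ∈ s, Metric.closedBall z (r / 2)) :
    ∃ D : ℝ, ∀ μ : Measure Y, IsProbabilityMeasure μ →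
      ∀ᵐ y ∂μ, lowerPointwiseDim μ y ≤ D := by
  obtain ⟨N, hN⟩ := hdoub
  have hD : (N : ℝ) < 2 ^ (N : ℝ) := by
    rw [Real.rpow_natCast]
    exact_mod_cast N.lt_two_pow_self
  refine ⟨N, fun μ _ => ae_iff.2 (measure_mono_null (fun y hy => ?_)
    (IsDoublingWith.measure_setOf_eventually_measure_closedBall_le_eq_zero hN hD μ))⟩
  exact eventually_measure_closedBall_le_rpow_of_lt_lowerPointwiseDim μ (not_le.1 hy)

/-- In a doubling metric space `Y` there is a finite constant `D` such
that for every Borel probability measure `μ` on `Y`, the lower pointwise dimension of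
`μ` is at most `D` at `μ`-almost every point. -/
theorem lowerPointwiseDim_le_of_doubling
    {Y : Type*} [MetricSpace Y] [MeasurableSpace Y] [BorelSpace Y]
    (hdoub : ∃ N : ℕ, ∀ (y : Y) (r : ℝ), ∃ s : Finset Y,
      s.card ≤ N ∧ Metric.closedBall y r ⊆ ⋃ z ∈ s, Metric.closedBall z (r / 2)) :
    ∃ D : ℝ, ∀ μ : Measure Y, IsProbabilityMeasure μ →
      ∀ᵐ y ∂μ, lowerPointwiseDim μ y ≤ D :=
  lowerPointwiseDim_le_of_doubling_general hdoub
end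

section
/- Let Y be a complete separable metric space satisfying the Besicovitch covering property. Then there exists a constant C (depending only on Y) such that for every finite Borel measure μ on Y and every Borel measure ν on Y, setting φ_*(y) = inf_{ρ>0} ν(B(y,ρ))/μ(B(y,ρ)) ∈ [0,∞] (with the convention that the quotient equals ∞ whenever μ(B(y,ρ)) = 0, and where B(y,ρ) is the closed ball of radius ρ centred at y), one has ∫_Y max(0, −log φ_*(y)) dν(y) ≤ C·μ(Y). In particular the nonnegative Borel function max(0, −log φ_*) is ν-integrable whenever μ(Y) < ∞. -/
open MeasureTheory

/-- `φ_ρ(y) = ν(B(y,ρ)) / μ(B(y,ρ))`, with the convention that the quotient is `∞`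
whenever `μ(B(y,ρ)) = 0`.  Here `B(y,ρ)` is the closed ball of radius `ρ` about `y`. -/
noncomputable def ballRatio {Y : Type*} [MetricSpace Y] [MeasurableSpace Y]
    (μ ν : Measure Y) (y : Y) (ρ : ℝ) : ENNReal :=
  if μ (Metric.closedBall y ρ) = 0 then ⊤
  else ν (Metric.closedBall y ρ) / μ (Metric.closedBall y ρ)

/-- `φ_*(y) = inf_{ρ > 0} φ_ρ(y)`. -/
noncomputable def phiStar {Y : Type*} [MetricSpace Y] [MeasurableSpace Y]
    (μ ν : Measure Y) (y : Y) : ENNReal :=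
  ⨅ ρ ∈ Set.Ioi (0 : ℝ), ballRatio μ ν y ρ

/-- `negLogENN x = max (0, - log x)`, valued in `[0,∞]`: it is `∞` when `x = 0`,
`ENNReal.ofReal (- log x)` for `0 < x < ∞` (which is `max 0 (- log x)`), and `0` when
`x = ∞`. -/
noncomputable def negLogENN (x : ENNReal) : ENNReal :=
  if x = 0 then ⊤ else ENNReal.ofReal (- Real.log x.toReal)

/-!
The Besicovitch covering property turns the definition of `φ_*` into a weak-type maximal
inequality `ν {φ_* < t} ≤ N t μ(Y)`: the points of `{φ_* < t}` are centres of balls `B` with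
`ν(B) < t μ(B)`, and each of the `N` disjoint subfamilies covering them has total `μ`-mass at most
`μ(Y)`. Since `max(0, -log x) ≤ #{n ∈ ℕ | x < e^{-n}}`, integrating against `ν` and summing the
weak-type bounds over the levels `t = e^{-n}` gives `∫ max(0, -log φ_*) dν ≤ N μ(Y) ∑ e^{-n}`.
-/

open Metric Set
open scoped ENNReal

theorem ENNReal.ofReal_le_tsum_ite_natCast_lt (L : ℝ) :
    ENNReal.ofReal L ≤ ∑' n : ℕ, if (n : ℝ) < L then 1 else 0 := by
  have hcount : ∑ n ∈ Finset.range ⌈L⌉₊, (if (n : ℝ) < L then 1 else 0 : ℝ≥0∞) = ⌈L⌉₊ := by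
    rw [Finset.sum_congr rfl fun n hn => if_pos (Nat.lt_ceil.1 (Finset.mem_range.1 hn))]
    simp
  calc ENNReal.ofReal L ≤ ENNReal.ofReal ⌈L⌉₊ := ENNReal.ofReal_le_ofReal (Nat.le_ceil L)
    _ = ∑ n ∈ Finset.range ⌈L⌉₊, if (n : ℝ) < L then 1 else 0 := by
      rw [ENNReal.ofReal_natCast, hcount]
    _ ≤ _ := ENNReal.sum_le_tsum _

theorem negLogENN_le_tsum_indicator (x : ℝ≥0∞) :
    negLogENN x ≤ ∑' n : ℕ, (Iio (ENNReal.ofReal (Real.exp (-1)) ^ n)).indicator 1 x := by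
  have hlevel (n : ℕ) : ENNReal.ofReal (Real.exp (-1)) ^ n = ENNReal.ofReal (Real.exp (-n)) := by
    rw [← ENNReal.ofReal_pow (Real.exp_pos _).le, ← Real.exp_nat_mul, mul_neg_one]
  rcases eq_or_ne x 0 with rfl | hx0
  · have hpos (n : ℕ) : 0 < ENNReal.ofReal (Real.exp (-1)) ^ n :=
      ENNReal.pow_pos (ENNReal.ofReal_pos.2 (Real.exp_pos _)) n
    simp [indicator_of_mem (mem_Iio.2 (hpos _))]
  rw [negLogENN, if_neg hx0]
  refine (ENNReal.ofReal_le_tsum_ite_natCast_lt _).trans (ENNReal.tsum_le_tsum fun n => ?_)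
  split_ifs with hn
  · -- `n < -log x.toReal` forces `x ≠ ∞`, since `Real.log 0 = 0`
    have hxtop : x ≠ ∞ := by
      rintro rfl
      exact (Nat.cast_nonneg n).not_gt (by simpa using hn)
    have hxpos : 0 < x.toReal := ENNReal.toReal_pos hx0 hxtop
    have hlt : x.toReal < Real.exp (-n) := (Real.log_lt_iff_lt_exp hxpos).1 (by linarith)
    have hmem : x ∈ Iio (ENNReal.ofReal (Real.exp (-1)) ^ n) := by
      rw [mem_Iio, hlevel]
      exact (ENNReal.lt_ofReal_iff_toReal_lt hxtop).2 hlt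
    rw [indicator_of_mem hmem]
    rfl
  · exact zero_le

theorem inv_one_sub_ofReal_exp_neg_one_le_two : (1 - ENNReal.ofReal (Real.exp (-1)))⁻¹ ≤ 2 := by
  have htwo : (2 : ℝ) ≤ Real.exp 1 := by linarith [Real.add_one_le_exp 1]
  have hle : ENNReal.ofReal (Real.exp (-1)) ≤ 2⁻¹ := by
    rw [← ENNReal.ofReal_ofNat 2, ← ENNReal.ofReal_inv_of_pos two_pos, Real.exp_neg]
    exact ENNReal.ofReal_le_ofReal (inv_anti₀ two_pos htwo)
  rw [ENNReal.inv_le_iff_inv_le, ← ENNReal.one_sub_inv_two]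
  exact tsub_le_tsub_left hle 1

namespace MeasureTheory

variable {α : Type*} [MeasurableSpace α] {μ ν : Measure α}

theorem lintegral_tsum_indicator_one_le {ι : Type*} [Countable ι] (s : ι → Set α) :
    ∫⁻ a, ∑' i, (s i).indicator 1 a ∂μ ≤ ∑' i, μ (s i) :=
  calc ∫⁻ a, ∑' i, (s i).indicator 1 a ∂μ
      ≤ ∫⁻ a, ∑' i, (toMeasurable μ (s i)).indicator 1 a ∂μ :=
        lintegral_mono fun a => ENNReal.tsum_le_tsum fun i =>
          indicator_le_indicator_of_subset (subset_toMeasurable μ (s i)) (fun _ => zero_le) a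
    _ = ∑' i, μ (s i) := by
        rw [lintegral_tsum fun i =>
          (measurable_one.indicator (measurableSet_toMeasurable μ (s i))).aemeasurable]
        simp_rw [lintegral_indicator_one (measurableSet_toMeasurable _ _), measure_toMeasurable]

theorem measure_biUnion_le_mul_of_pairwiseDisjoint [SFinite μ] {ι : Type*} {u : Set ι}
    {A : ι → Set α} {t : ℝ≥0∞} (hA : ∀ i ∈ u, MeasurableSet (A i)) (hd : u.PairwiseDisjoint A)
    (hlt : ∀ i ∈ u, ν (A i) < t * μ (A i)) :
    ν (⋃ i ∈ u, A i) ≤ t * μ (⋃ i ∈ u, A i) := by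
  -- the strict inequality forces `μ (A i) ≠ 0`, and disjoint sets of positive measure are countable
  have hu : u.Countable := by
    have hne : ∀ i ∈ u, μ (A i) ≠ 0 := fun i hi h => by simpa [h] using hlt i hi
    have hpos : {i : u | 0 < μ (A i)} = univ :=
      eq_univ_of_forall fun i => pos_iff_ne_zero.2 (hne i i.2)
    have := Measure.countable_meas_pos_of_disjoint_iUnion (μ := μ) (fun i : u => hA i i.2)
      fun i j hij => hd i.2 j.2 (Subtype.coe_injective.ne hij)
    rwa [hpos, countable_univ_iff, countable_coe_iff] at this
  calc ν (⋃ i ∈ u, A i) ≤ ∑' i : u, ν (A i) := measure_biUnion_le ν hu A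
    _ ≤ ∑' i : u, t * μ (A i) := ENNReal.tsum_le_tsum fun i => (hlt i i.2).le
    _ = t * μ (⋃ i ∈ u, A i) := by
      rw [ENNReal.tsum_mul_left, measure_biUnion hu hd hA]

end MeasureTheory

theorem Besicovitch.measure_le_of_forall_closedBall_lt {Y : Type*} [MetricSpace Y]
    [MeasurableSpace Y] [OpensMeasurableSpace Y] {N : ℕ} {τ : ℝ} (hτ : 1 < τ)
    (hN : IsEmpty (Besicovitch.SatelliteConfig Y N τ)) {μ ν : Measure Y} [SFinite μ]
    {t : ℝ≥0∞} {R : ℝ} {s : Set Y}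
    (hs : ∀ y ∈ s, ∃ ρ ∈ Ioc 0 R, ν (closedBall y ρ) < t * μ (closedBall y ρ)) :
    ν s ≤ N * (t * μ univ) := by
  choose r hr hlt using fun y : s => hs y y.2
  let q : Besicovitch.BallPackage s Y :=
    { c := (↑), r := r, rpos := fun y => (hr y).1, r_bound := R, r_le := fun y => (hr y).2 }
  obtain ⟨u, hdisj, hcover⟩ := Besicovitch.exist_disjoint_covering_families hτ hN q
  have hs_sub : s ⊆ ⋃ i, ⋃ y ∈ u i, closedBall (y : Y) (r y) := by
    refine ((Subtype.range_coe (s := s)).symm.subset.trans hcover).trans ?_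
    exact iUnion_mono fun i => iUnion₂_mono fun y _ => ball_subset_closedBall
  calc ν s ≤ ∑ i, ν (⋃ y ∈ u i, closedBall (y : Y) (r y)) :=
        (measure_mono hs_sub).trans (measure_iUnion_fintype_le ν _)
    _ ≤ ∑ _i : Fin N, t * μ univ := Finset.sum_le_sum fun i _ =>
        (measure_biUnion_le_mul_of_pairwiseDisjoint (fun _ _ => measurableSet_closedBall)
          (hdisj i) fun y _ => hlt y).trans (mul_le_mul_right (measure_mono (subset_univ _)) t)
    _ = N * (t * μ univ) := by simp

section phiStar

variable {Y : Type*} [MetricSpace Y] [MeasurableSpace Y] {μ ν : Measure Y} [IsFiniteMeasure μ]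

theorem ballRatio_lt_iff {y : Y} {ρ : ℝ} {t : ℝ≥0∞} :
    ballRatio μ ν y ρ < t ↔ ν (closedBall y ρ) < t * μ (closedBall y ρ) := by
  unfold ballRatio
  split_ifs with h0
  · simp [h0]
  · exact ENNReal.div_lt_iff (Or.inl h0) (Or.inl (measure_ne_top μ _))

theorem phiStar_lt_iff {y : Y} {t : ℝ≥0∞} :
    phiStar μ ν y < t ↔ ∃ ρ ∈ Ioi 0, ν (closedBall y ρ) < t * μ (closedBall y ρ) := by
  simp only [phiStar, iInf_lt_iff, ballRatio_lt_iff, exists_prop]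

theorem measure_phiStar_lt_le [OpensMeasurableSpace Y] {N : ℕ} {τ : ℝ} (hτ : 1 < τ)
    (hN : IsEmpty (Besicovitch.SatelliteConfig Y N τ)) (t : ℝ≥0∞) :
    ν {y | phiStar μ ν y < t} ≤ N * (t * μ univ) := by
  set S : ℕ → Set Y := fun n => {y | ∃ ρ ∈ Ioc 0 (n : ℝ),
    ν (closedBall y ρ) < t * μ (closedBall y ρ)}
  have hS : {y | phiStar μ ν y < t} = ⋃ n, S n := by
    ext y
    simp only [mem_ofPred_eq, phiStar_lt_iff, mem_iUnion, S]
    constructor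
    · rintro ⟨ρ, hρ, hlt⟩
      exact ⟨⌈ρ⌉₊, ρ, ⟨hρ, Nat.le_ceil ρ⟩, hlt⟩
    · rintro ⟨n, ρ, hρ, hlt⟩
      exact ⟨ρ, hρ.1, hlt⟩
  have hmono : Monotone S := fun m n hmn y ⟨ρ, hρ, hlt⟩ =>
    ⟨ρ, Ioc_subset_Ioc_right (Nat.cast_le.2 hmn) hρ, hlt⟩
  rw [hS, hmono.measure_iUnion]
  exact iSup_le fun n => Besicovitch.measure_le_of_forall_closedBall_lt hτ hN fun y hy => hy

end phiStar

theorem lintegral_negLog_phiStar_le_general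
    {Y : Type*} [MetricSpace Y]
    [MeasurableSpace Y] [BorelSpace Y] [HasBesicovitchCovering Y] :
    ∃ C : NNReal, ∀ μ ν : Measure Y, IsFiniteMeasure μ →
      ∫⁻ y, negLogENN (phiStar μ ν y) ∂ν ≤ (C : ENNReal) * μ Set.univ := by
  obtain ⟨N, τ, hτ, hN⟩ := HasBesicovitchCovering.no_satelliteConfig (α := Y)
  refine ⟨2 * N, fun μ ν _ => ?_⟩
  set q := ENNReal.ofReal (Real.exp (-1))
  calc ∫⁻ y, negLogENN (phiStar μ ν y) ∂ν
      ≤ ∫⁻ y, ∑' n : ℕ, (phiStar μ ν ⁻¹' Iio (q ^ n)).indicator 1 y ∂ν :=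
        lintegral_mono fun y => (negLogENN_le_tsum_indicator _).trans_eq <| by
          simp_rw [← indicator_comp_right]; rfl
    _ ≤ ∑' n : ℕ, ν {y | phiStar μ ν y < q ^ n} := lintegral_tsum_indicator_one_le _
    _ ≤ ∑' n : ℕ, N * (q ^ n * μ univ) :=
        ENNReal.tsum_le_tsum fun n => measure_phiStar_lt_le hτ hN _
    _ = N * μ univ * (1 - q)⁻¹ := by
        rw [ENNReal.tsum_mul_left, ENNReal.tsum_mul_right, ENNReal.tsum_geometric]; ring
    _ ≤ N * μ univ * 2 := by gcongr; exact inv_one_sub_ofReal_exp_neg_one_le_two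
    _ = ((2 * N : NNReal) : ENNReal) * μ univ := by push_cast; ring

/-- Let `Y` be a complete separable metric space with the Besicovitch
covering property. There is a constant `C`, depending only on `Y`, such that for every
finite Borel measure `μ` and every Borel measure `ν` on `Y`,
`∫ max (0, - log φ_*) dν ≤ C * μ(Y)`. -/
theorem lintegral_negLog_phiStar_le
    {Y : Type*} [MetricSpace Y] [CompleteSpace Y] [TopologicalSpace.SeparableSpace Y]
    [MeasurableSpace Y] [BorelSpace Y] [HasBesicovitchCovering Y] :
    ∃ C : NNReal, ∀ μ ν : Measure Y, IsFiniteMeasure μ →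
      ∫⁻ y, negLogENN (phiStar μ ν y) ∂ν ≤ (C : ENNReal) * μ Set.univ :=
  lintegral_negLog_phiStar_le_general
end

section
/- Let Y be a complete separable metric space satisfying the Besicovitch covering property, Z a complete separable metric space, and π : Y → Z a Lipschitz map. Let μ be a Borel probability measure on Y, let ν = π_*μ be its push-forward, and let (μ_z)_{z∈Z} be a disintegration of μ over ν along π. Assume there exist a constant γ ≥ 0 and a Borel map δ : Z → [0,∞) such that for μ-almost every y ∈ Y: (i) the lower pointwise dimension of μ_{π(y)} at y is ≥ γ, and (ii) the lower pointwise dimension of ν at π(y) is ≥ δ(π(y)). Then for μ-almost every y ∈ Y, the lower pointwise dimension of μ at y is ≥ γ + δ(π(y)). -/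
/-!
Fix `ε > 0`. By the bound on the fibre dimensions, almost every `y` lies in a measurable set `A`
on which `μ_{π y'}(B(y', t)) ≤ t ^ (γ - ε)` for all `t < r`. Every fibre meets `B(y, ρ) ∩ A`
inside a ball of radius `2ρ` around one of its points, and only fibres over `B(π y, Kρ)` meet it,
so disintegrating gives `μ(B(y, ρ) ∩ A) ≤ (2ρ) ^ (γ - ε) ν(B(π y, Kρ))`. At almost every point of
`A` the Besicovitch density theorem gives `μ(B(y, ρ)) ≤ 2 μ(B(y, ρ) ∩ A)` for small `ρ`, and the
bound on `ν` then yields `μ(B(y, ρ)) ≲ ρ ^ (γ + δ(π y) - 2ε)`.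

`lowerPointwiseDim` is a liminf in `ℝ`, which takes the junk value `0` when the quotient tends to
`+∞`; so such a bound only passes to it where the quotient is frequently bounded. The absence of
satellite configurations bounds the number of separated points in a ball of radius `2 ^ k σ` by
`(N + 1) ^ (k + 1)`, and a covering argument then shows that `μ(B(y, ρ)) ≥ ρ ^ (N + 1)` for
arbitrarily small `ρ` at almost every `y`.
-/

open MeasureTheory Filter Topology

open Metric Set
open scoped ENNReal NNReal

section PointwiseDimension

variable {W : Type*} [MetricSpace W] [MeasurableSpace W] (m : Measure W) (w : W)

noncomputable def dimQuotient (ρ : ℝ) : ℝ :=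
  Real.log (m (closedBall w ρ)).toReal / Real.log ρ

theorem lowerPointwiseDim_eq_liminf :
    lowerPointwiseDim m w = liminf (dimQuotient m w) (𝓝[>] 0) := rfl

variable {m w}

theorem dimQuotient_nonneg [IsZeroOrProbabilityMeasure m] {ρ : ℝ} (hρ : ρ ∈ Ioo 0 1) :
    0 ≤ dimQuotient m w ρ :=
  div_nonneg_of_nonpos
    (Real.log_nonpos ENNReal.toReal_nonneg (ENNReal.toReal_le_of_le_ofReal zero_le_one
      (by simpa using prob_le_one)))
    (Real.log_nonpos hρ.1.le hρ.2.le)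

theorem measure_closedBall_le_rpow_of_le_dimQuotient [IsFiniteMeasure m] {a ρ : ℝ}
    (hρ : ρ ∈ Ioo 0 1) (h : a ≤ dimQuotient m w ρ) :
    m (closedBall w ρ) ≤ ENNReal.ofReal (ρ ^ a) := by
  rcases eq_or_ne (m (closedBall w ρ)) 0 with h0 | h0
  · simp [h0]
  have hlog : Real.log (m (closedBall w ρ)).toReal ≤ Real.log (ρ ^ a) := by
    rw [Real.log_rpow hρ.1]
    exact (le_div_iff_of_neg (Real.log_neg hρ.1 hρ.2)).1 h
  rw [← ENNReal.ofReal_toReal (measure_ne_top m _)]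
  refine ENNReal.ofReal_le_ofReal ((Real.log_le_log_iff ?_ (Real.rpow_pos_of_pos hρ.1 a)).1 hlog)
  exact ENNReal.toReal_pos h0 (measure_ne_top m _)

theorem eventually_measure_closedBall_le_rpow [IsZeroOrProbabilityMeasure m] {a : ℝ}
    (h : a < lowerPointwiseDim m w) :
    ∀ᶠ ρ in 𝓝[>] 0, m (closedBall w ρ) ≤ ENNReal.ofReal (ρ ^ a) := by
  rw [lowerPointwiseDim_eq_liminf] at h
  have hbdd : IsBoundedUnder (· ≥ ·) (𝓝[>] 0) (dimQuotient m w) :=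
    isBoundedUnder_of_eventually_ge <|
      Filter.mem_of_superset (Ioo_mem_nhdsGT one_pos) fun ρ hρ => dimQuotient_nonneg hρ
  filter_upwards [eventually_lt_of_lt_liminf h hbdd, Ioo_mem_nhdsGT one_pos] with ρ hρa hρ
  exact measure_closedBall_le_rpow_of_le_dimQuotient hρ hρa.le

theorem le_lowerPointwiseDim_of_eventually_le_mul_rpow [IsFiniteMeasure m] {a C : ℝ}
    (hcob : IsCoboundedUnder (· ≥ ·) (𝓝[>] 0) (dimQuotient m w)) (hC : 0 < C)
    (h : ∀ᶠ ρ in 𝓝[>] 0,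
      0 < m (closedBall w ρ) ∧ m (closedBall w ρ) ≤ ENNReal.ofReal (C * ρ ^ a)) :
    a ≤ lowerPointwiseDim m w := by
  rw [lowerPointwiseDim_eq_liminf]
  refine le_of_forall_lt_imp_le_of_dense fun b hb => le_liminf_of_le hcob ?_
  have hlogC : Tendsto (fun ρ => Real.log C / Real.log ρ) (𝓝[>] 0) (𝓝 0) :=
    tendsto_const_nhds.div_atBot Real.tendsto_log_nhdsGT_zero
  filter_upwards [h, hlogC.eventually (eventually_ge_nhds (sub_neg.2 hb)),
    Ioo_mem_nhdsGT one_pos] with ρ ⟨hpos, hle⟩ hρC hρ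
  have hlogρ := Real.log_neg hρ.1 hρ.2
  have hlog : Real.log (m (closedBall w ρ)).toReal ≤ Real.log C + a * Real.log ρ := by
    rw [← Real.log_rpow hρ.1, ← Real.log_mul hC.ne' (Real.rpow_pos_of_pos hρ.1 a).ne']
    exact Real.log_le_log (ENNReal.toReal_pos hpos.ne' (measure_ne_top _ _))
      (ENNReal.toReal_le_of_le_ofReal (mul_pos hC (Real.rpow_pos_of_pos hρ.1 a)).le hle)
  rw [le_div_iff_of_neg hlogρ] at hρC
  rw [dimQuotient, le_div_iff_of_neg hlogρ]
  linarith

theorem isCoboundedUnder_dimQuotient_of_frequently [IsFiniteMeasure m] {s : ℕ}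
    (h : ∃ᶠ ρ in 𝓝[>] 0, ENNReal.ofReal (ρ ^ s) ≤ m (closedBall w ρ)) :
    IsCoboundedUnder (· ≥ ·) (𝓝[>] 0) (dimQuotient m w) := by
  refine IsCoboundedUnder.of_frequently_le (a := s) <|
    (h.and_eventually (Ioo_mem_nhdsGT one_pos)).mono fun ρ ⟨hle, hρ⟩ => ?_
  have hlog := Real.log_le_log (pow_pos hρ.1 s)
    ((ENNReal.ofReal_le_iff_le_toReal (measure_ne_top m _)).1 hle)
  rw [Real.log_pow] at hlog
  exact (div_le_iff_of_neg (Real.log_neg hρ.1 hρ.2)).2 (by linarith)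

end PointwiseDimension

section Packing

variable {Y : Type*} [MetricSpace Y] {N : ℕ} {τ : ℝ}

theorem card_le_of_subset_annulus (hτ : 1 < τ) (hE : IsEmpty (Besicovitch.SatelliteConfig Y N τ))
    {x : Y} {σ : ℝ} (hσ : 0 < σ) {F : Finset Y}
    (hF : ∀ p ∈ F, σ ≤ dist p x ∧ dist p x ≤ 2 * σ)
    (hsep : (F : Set Y).Pairwise fun p q => σ < dist p q) : F.card ≤ N := by
  by_contra! hN
  let e : Fin N → Y := fun i => F.equivFin.symm (Fin.castLE hN.le i)
  have he : Function.Injective e :=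
    Subtype.val_injective.comp (F.equivFin.symm.injective.comp (Fin.castLE_injective _))
  have heF (i : Fin N) : e i ∈ F := (F.equivFin.symm _).2
  have hστ : σ ≤ τ * σ := le_mul_of_one_le_left hσ.le hτ.le
  -- `N` satellites of radius `σ` around a last ball of radius `τ σ` centred at `x`.
  refine hE.false
    { c := Fin.snoc e x
      r := Fin.snoc (fun _ => σ) (τ * σ)
      rpos := fun i => ?_
      h := fun i j hij => ?_
      hlast := fun i hi => ?_
      inter := fun i hi => ?_ }
  · induction i using Fin.lastCases <;> simp [hσ, hσ.trans_le hστ]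
  · induction i using Fin.lastCases <;> induction j using Fin.lastCases
    · exact absurd rfl hij
    · exact .inr (by simpa using (hF _ (heF _)).1)
    · exact .inl (by simpa using (hF _ (heF _)).1)
    · refine .inl ⟨?_, by simpa using hστ⟩
      simpa using (hsep (heF _) (heF _) (he.ne (by simpa using hij))).le
  all_goals
    obtain ⟨a, rfl⟩ := Fin.exists_castSucc_eq.2 hi.ne
    have := hF _ (heF a)
  · simpa using this.1
  · simp only [Fin.snoc_castSucc, Fin.snoc_last]
    linarith

theorem card_le_of_subset_closedBall (hτ : 1 < τ)
    (hE : IsEmpty (Besicovitch.SatelliteConfig Y N τ)) {x : Y} {σ : ℝ} (hσ : 0 < σ) {F : Finset Y}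
    (hF : ∀ p ∈ F, dist p x ≤ σ) (hsep : (F : Set Y).Pairwise fun p q => σ < dist p q) :
    F.card ≤ N + 1 := by
  classical
  rcases F.eq_empty_or_nonempty with rfl | ⟨p, hp⟩
  · simp
  rw [← Finset.card_erase_add_one hp, add_le_add_iff_right]
  refine card_le_of_subset_annulus hτ hE (x := p) hσ (fun q hq => ?_) (hsep.mono (by simp))
  obtain ⟨hqp, hq⟩ := Finset.mem_erase.1 hq
  exact ⟨(hsep hq hp hqp).le,
    by linarith [dist_triangle q x p, hF q hq, hF p hp, dist_comm x p]⟩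

theorem exists_finset_subset_cover_of_card_le {T : Set Y} {ρ : ℝ} (hρ : 0 ≤ ρ) {L : ℕ}
    (hT : ∀ F : Finset Y, ↑F ⊆ T → (F : Set Y).Pairwise (fun p q => ρ < dist p q) → F.card ≤ L) :
    ∃ G : Finset Y, ↑G ⊆ T ∧ G.card ≤ L ∧ T ⊆ ⋃ g ∈ G, closedBall g ρ := by
  classical
  let Q (n : ℕ) : Prop :=
    ∃ F : Finset Y, ↑F ⊆ T ∧ (F : Set Y).Pairwise (fun p q => ρ < dist p q) ∧ F.card = n
  obtain ⟨G, hGT, hGsep, hGcard⟩ : Q (Nat.findGreatest Q L) :=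
    Nat.findGreatest_spec (Nat.zero_le _) ⟨∅, by simp⟩
  have hQL {n : ℕ} : Q n → n ≤ L := by rintro ⟨F, hFT, hFsep, rfl⟩; exact hT F hFT hFsep
  refine ⟨G, hGT, hQL ⟨G, hGT, hGsep, rfl⟩, fun t ht => ?_⟩
  by_contra hcov
  simp only [mem_iUnion, mem_closedBall, not_exists, not_le] at hcov
  have htG : t ∉ G := fun h => (hcov t h).not_ge (by simpa using hρ)
  have hQ : Q (G.card + 1) := by
    refine ⟨insert t G, ?_, ?_, Finset.card_insert_of_notMem htG⟩
    · simpa [Set.insert_subset_iff] using ⟨ht, hGT⟩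
    · rw [Finset.coe_insert, Set.pairwise_insert]
      exact ⟨hGsep, fun g hg _ => ⟨hcov g hg, by rw [dist_comm]; exact hcov g hg⟩⟩
  have := Nat.le_findGreatest (hQL hQ) hQ
  omega

theorem card_le_of_subset_closedBall_two_pow (hτ : 1 < τ)
    (hE : IsEmpty (Besicovitch.SatelliteConfig Y N τ)) (k : ℕ) {x : Y} {σ : ℝ} (hσ : 0 < σ)
    {F : Finset Y} (hF : ∀ p ∈ F, dist p x ≤ 2 ^ k * σ)
    (hsep : (F : Set Y).Pairwise fun p q => σ < dist p q) : F.card ≤ (N + 1) ^ (k + 1) := by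
  classical
  induction k generalizing x F with
  | zero => simpa using card_le_of_subset_closedBall hτ hE hσ (by simpa using hF) hsep
  | succ k ih =>
    set β := 2 ^ k * σ
    have hβ : 0 < β := by positivity
    have hF' (p) (hp : p ∈ F) : dist p x ≤ 2 * β := by
      rw [← mul_assoc, ← pow_succ']; exact hF p hp
    have hnear (c : Y) : (F.filter (dist · c ≤ β)).card ≤ (N + 1) ^ (k + 1) :=
      ih (fun p hp => (Finset.mem_filter.1 hp).2)
        (hsep.mono (Finset.coe_subset.2 (Finset.filter_subset _ _)))
    -- The points of `F` outside `closedBall x β` lie in an annulus, so `N` balls of radius `β`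
    -- cover them.
    obtain ⟨G, -, hGcard, hcover⟩ := exists_finset_subset_cover_of_card_le
      (T := ↑(F.filter (β < dist · x))) hβ.le (L := N) fun F' hF'T hsep' =>
        card_le_of_subset_annulus hτ hE hβ (fun p hp => by
          have := Finset.mem_filter.1 (hF'T hp)
          exact ⟨this.2.le, hF' p this.1⟩) hsep'
    have hsub : F ⊆ F.filter (dist · x ≤ β) ∪ G.biUnion fun g => F.filter (dist · g ≤ β) := by
      intro p hp
      by_cases h : dist p x ≤ β
      · simp [hp, h]
      · obtain ⟨g, hg, hpg⟩ :=
          mem_iUnion₂.1 (hcover (Finset.mem_coe.2 (Finset.mem_filter.2 ⟨hp, not_le.1 h⟩)))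
        simp only [Finset.mem_union, Finset.mem_biUnion, Finset.mem_filter]
        exact .inr ⟨g, hg, hp, hpg⟩
    calc F.card
        ≤ (F.filter (dist · x ≤ β)).card + ∑ g ∈ G, (F.filter (dist · g ≤ β)).card :=
          (Finset.card_le_card hsub).trans <|
            (Finset.card_union_le _ _).trans (Nat.add_le_add_left Finset.card_biUnion_le _)
      _ ≤ (N + 1) ^ (k + 1) + ∑ g ∈ G, (N + 1) ^ (k + 1) :=
          add_le_add (hnear x) (Finset.sum_le_sum fun g _ => hnear g)
      _ ≤ (N + 1) ^ (k + 1 + 1) := by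
          rw [Finset.sum_const, smul_eq_mul, ← one_add_mul, pow_succ' _ (k + 1)]
          exact Nat.mul_le_mul_right _ (by omega)

theorem measure_eq_zero_of_measure_closedBall_le_pow [MeasurableSpace Y] (hτ : 1 < τ)
    (hE : IsEmpty (Besicovitch.SatelliteConfig Y N τ)) {μ : Measure Y} {T : Set Y} {x : Y}
    {r : ℝ} (hr : 0 < r) (hTx : T ⊆ closedBall x r)
    (hT : ∀ y ∈ T, ∀ ρ ∈ Ioc 0 r, μ (closedBall y ρ) ≤ ENNReal.ofReal (ρ ^ (N + 1))) :
    μ T = 0 := by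
  have hbound (k : ℕ) :
      μ T ≤ ENNReal.ofReal ((N + 1) * r ^ (N + 1) * ((N + 1) / 2 ^ (N + 1)) ^ k) := by
    set ρ := r / 2 ^ k
    have hρ : 0 < ρ := by positivity
    have hρr : ρ ≤ r := div_le_self hr.le (one_le_pow₀ one_le_two)
    obtain ⟨G, hGT, hGcard, hcover⟩ := exists_finset_subset_cover_of_card_le hρ.le
      fun F hFT hsep => card_le_of_subset_closedBall_two_pow hτ hE k hρ (fun p hp => by
        rw [mul_div_cancel₀ _ (by positivity)]; exact hTx (hFT hp)) hsep
    calc μ T ≤ ∑ g ∈ G, μ (closedBall g ρ) :=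
          (measure_mono hcover).trans (measure_biUnion_finset_le _ _)
      _ ≤ ∑ g ∈ G, ENNReal.ofReal (ρ ^ (N + 1)) :=
          Finset.sum_le_sum fun g hg => hT g (hGT hg) ρ ⟨hρ, hρr⟩
      _ = ENNReal.ofReal (G.card * ρ ^ (N + 1)) := by
          rw [Finset.sum_const, nsmul_eq_mul, ENNReal.ofReal_mul (by positivity),
            ENNReal.ofReal_natCast]
      _ ≤ ENNReal.ofReal ((N + 1) ^ (k + 1) * ρ ^ (N + 1)) :=
          ENNReal.ofReal_le_ofReal (by gcongr; exact_mod_cast hGcard)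
      _ = _ := by
          rw [div_pow, div_pow, ← pow_mul, ← pow_mul, mul_comm k, pow_succ]
          field_simp
  have hratio : ((N + 1) / 2 ^ (N + 1) : ℝ) < 1 :=
    (div_lt_one (by positivity)).2 (by exact_mod_cast Nat.lt_two_pow_self)
  have hlim := ENNReal.tendsto_ofReal
    ((tendsto_pow_atTop_nhds_zero_of_lt_one (by positivity) hratio).const_mul
      ((N + 1) * r ^ (N + 1)))
  rw [mul_zero, ENNReal.ofReal_zero] at hlim
  exact nonpos_iff_eq_zero.1 (ge_of_tendsto hlim (Eventually.of_forall hbound))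

end Packing

section BesicovitchSpace

variable {Y : Type*} [MetricSpace Y] [HasBesicovitchCovering Y] [SecondCountableTopology Y]
  [MeasurableSpace Y]

theorem exists_ae_frequently_pow_le_measure_closedBall (μ : Measure Y) :
    ∃ s : ℕ, ∀ᵐ y ∂μ, ∃ᶠ ρ in 𝓝[>] 0, ENNReal.ofReal (ρ ^ s) ≤ μ (closedBall y ρ) := by
  obtain ⟨N, τ, hτ, hE⟩ := HasBesicovitchCovering.no_satelliteConfig (α := Y)
  let bad (r : ℝ) : Set Y :=
    {y | ∀ ρ ∈ Ioc 0 r, μ (closedBall y ρ) < ENNReal.ofReal (ρ ^ (N + 1))}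
  have hbad (n : ℕ) : μ (bad (1 / (n + 1))) = 0 := by
    have hr : (0 : ℝ) < 1 / (n + 1) := by positivity
    refine measure_null_of_locally_null _ fun y _ =>
      ⟨_, inter_mem_nhdsWithin _ (closedBall_mem_nhds y hr), ?_⟩
    exact measure_eq_zero_of_measure_closedBall_le_pow hτ hE hr inter_subset_right
      fun y' hy' ρ hρ => (hy'.1 ρ hρ).le
  refine ⟨N + 1, ?_⟩
  filter_upwards [ae_all_iff.2 fun n => measure_eq_zero_iff_ae_notMem.1 (hbad n)] with y hy
  by_contra h
  obtain ⟨u, hu, hsub⟩ := mem_nhdsGT_iff_exists_Ioo_subset.1 (not_frequently.1 h)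
  obtain ⟨n, hn⟩ := exists_nat_one_div_lt (mem_Ioi.1 hu)
  exact hy n fun ρ hρ => not_le.1 (hsub ⟨hρ.1, hρ.2.trans_lt hn⟩)

theorem ae_isCoboundedUnder_dimQuotient (μ : Measure Y) [IsFiniteMeasure μ] :
    ∀ᵐ y ∂μ, IsCoboundedUnder (· ≥ ·) (𝓝[>] 0) (dimQuotient μ y) := by
  obtain ⟨s, hs⟩ := exists_ae_frequently_pow_le_measure_closedBall μ
  exact hs.mono fun y => isCoboundedUnder_dimQuotient_of_frequently

theorem ae_eventually_measure_closedBall_le_two_mul_inter [BorelSpace Y]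
    (μ : Measure Y) [IsFiniteMeasure μ] {A : Set Y} (hA : MeasurableSet A) :
    ∀ᵐ y ∂μ, y ∈ A → ∀ᶠ ρ in 𝓝[>] 0,
      0 < μ (closedBall y ρ) ∧ μ (closedBall y ρ) ≤ 2 * μ (closedBall y ρ ∩ A) := by
  filter_upwards [Besicovitch.ae_tendsto_measure_inter_div_of_measurableSet μ hA] with y hy hyA
  rw [indicator_of_mem hyA, Pi.one_apply] at hy
  filter_upwards [hy.eventually (lt_mem_nhds (by norm_num : (2⁻¹ : ℝ≥0∞) < 1))] with ρ hρ
  have hB : μ (closedBall y ρ) ≠ 0 := fun h0 => by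
    simp [measure_mono_null inter_subset_right h0, h0] at hρ
  rw [ENNReal.lt_div_iff_mul_lt (.inl hB) (.inl (measure_ne_top _ _))] at hρ
  rw [inter_comm]
  exact ⟨pos_iff_ne_zero.2 hB, (ENNReal.inv_mul_le_iff two_ne_zero ENNReal.ofNat_ne_top).1 hρ.le⟩

end BesicovitchSpace

section DecaySet

variable {W : Type*} [MetricSpace W] [MeasurableSpace W]

def ballDecaySet (κ : W → Measure W) (a r : ℝ) : Set W :=
  {w | ∀ t ∈ Ioo 0 r, κ w (closedBall w t) ≤ ENNReal.ofReal (t ^ a)}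

theorem measure_closedBall_le_rpow_of_forall_rat {m : Measure W} {w : W} {a r t : ℝ}
    (h : ∀ q : ℚ, (q : ℝ) ∈ Ioo 0 r → m (closedBall w q) ≤ ENNReal.ofReal ((q : ℝ) ^ a))
    (ht : t ∈ Ioo 0 r) : m (closedBall w t) ≤ ENNReal.ofReal (t ^ a) := by
  have : (comap ((↑) : ℚ → ℝ) (𝓝[>] t)).NeBot := comap_neBot_iff.2 fun s hs => by
    obtain ⟨u, hu, hsub⟩ := mem_nhdsGT_iff_exists_Ioo_subset.1 hs
    obtain ⟨q, hq⟩ := exists_rat_btwn (mem_Ioi.1 hu)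
    exact ⟨q, hsub hq⟩
  have hlim : Tendsto (fun q : ℚ => ENNReal.ofReal ((q : ℝ) ^ a)) (comap (↑) (𝓝[>] t))
      (𝓝 (ENNReal.ofReal (t ^ a))) :=
    (ENNReal.continuous_ofReal.continuousAt.comp
      (Real.continuousAt_rpow_const t a (.inl ht.1.ne'))).tendsto.comp
      (tendsto_comap.mono_right nhdsWithin_le_nhds)
  refine ge_of_tendsto hlim ?_
  filter_upwards [preimage_mem_comap (Ioo_mem_nhdsGT ht.2)] with q hq
  exact (measure_mono (closedBall_subset_closedBall hq.1.le)).trans (h q ⟨ht.1.trans hq.1, hq.2⟩)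

theorem measurableSet_ballDecaySet {κ : W → Measure W}
    (hκ : ∀ t, Measurable fun w => κ w (closedBall w t)) (a r : ℝ) :
    MeasurableSet (ballDecaySet κ a r) := by
  have : ballDecaySet κ a r = ⋂ (q : ℚ) (_ : (q : ℝ) ∈ Ioo 0 r),
      {w | κ w (closedBall w q) ≤ ENNReal.ofReal ((q : ℝ) ^ a)} := by
    ext w
    simp only [mem_iInter]
    exact ⟨fun h q hq => h q hq, fun h t ht => measure_closedBall_le_rpow_of_forall_rat h ht⟩
  rw [this]
  exact .iInter fun q => .iInter fun _ => measurableSet_le (hκ q) measurable_const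

theorem exists_mem_ballDecaySet {κ : W → Measure W} {w : W} [IsZeroOrProbabilityMeasure (κ w)]
    {a : ℝ} (h : a < lowerPointwiseDim (κ w) w) : ∃ n : ℕ, w ∈ ballDecaySet κ a (1 / (n + 1)) := by
  obtain ⟨u, hu, hsub⟩ :=
    mem_nhdsGT_iff_exists_Ioo_subset.1 (eventually_measure_closedBall_le_rpow h)
  obtain ⟨n, hn⟩ := exists_nat_one_div_lt (mem_Ioi.1 hu)
  exact ⟨n, fun t ht => hsub ⟨ht.1, ht.2.trans hn⟩⟩

end DecaySet

section Disintegration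

variable {Y Z : Type*} [MetricSpace Y] [MeasurableSpace Y] [MeasurableSpace Z]
  {π : Y → Z} {μ : Measure Y} {μz : Z → Measure Y}

theorem measurable_measure_closedBall_comp [SecondCountableTopology Y] [OpensMeasurableSpace Y]
    (hπ : Measurable π) (hfam : ∀ s : Set Y, MeasurableSet s → Measurable fun z => μz z s)
    (hprob : ∀ z, IsProbabilityMeasure (μz z)) (t : ℝ) :
    Measurable fun y => μz (π y) (closedBall y t) := by
  let κ : ProbabilityTheory.Kernel Z Y := ⟨μz, Measure.measurable_of_measurable_coe _ hfam⟩
  have : ProbabilityTheory.IsMarkovKernel κ := ⟨hprob⟩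
  exact ProbabilityTheory.Kernel.measurable_kernel_prodMk_left (κ := κ.comap π hπ)
    (measurableSet_le (measurable_snd.dist measurable_fst) measurable_const :
      MeasurableSet {p : Y × Y | dist p.2 p.1 ≤ t})

theorem measure_closedBall_inter_le_mul_map [MetricSpace Z] [OpensMeasurableSpace Y]
    [OpensMeasurableSpace Z] {K : ℝ≥0} (hπ : LipschitzWith K π)
    (hfiber : ∀ᵐ z ∂(μ.map π), μz z ((π ⁻¹' {z})ᶜ) = 0)
    (hdis : ∀ s : Set Y, MeasurableSet s → μ s = ∫⁻ z, μz z s ∂(μ.map π))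
    {A : Set Y} (hA : MeasurableSet A) {ρ : ℝ} {b : ℝ≥0∞}
    (hb : ∀ y ∈ A, μz (π y) (closedBall y (2 * ρ)) ≤ b) (y : Y) :
    μ (closedBall y ρ ∩ A) ≤ b * μ.map π (closedBall (π y) (K * ρ)) := by
  rw [hdis _ (measurableSet_closedBall.inter hA),
    ← lintegral_indicator_const measurableSet_closedBall]
  refine lintegral_mono_ae ?_
  filter_upwards [hfiber] with z hz
  by_cases hex : ∃ y' ∈ closedBall y ρ ∩ A, π y' = z
  · obtain ⟨y', ⟨hy'ρ, hy'A⟩, rfl⟩ := hex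
    have hy'ρ : dist y' y ≤ ρ := hy'ρ
    rw [indicator_of_mem (mem_closedBall.2 ((hπ.dist_le_mul y' y).trans (by gcongr)))]
    calc μz (π y') (closedBall y ρ ∩ A) ≤ μz (π y') (closedBall y' (2 * ρ)) :=
          measure_mono (inter_subset_left.trans (closedBall_subset_closedBall' (by
            rw [dist_comm]; linarith)))
      _ ≤ b := hb y' hy'A
  · calc μz z (closedBall y ρ ∩ A) ≤ μz z (π ⁻¹' {z})ᶜ :=
          measure_mono fun w hw hwz => hex ⟨w, hw, hwz⟩
      _ = 0 := hz
      _ ≤ _ := zero_le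

theorem add_le_lowerPointwiseDim_of_subset_ballDecaySet [MetricSpace Z] [OpensMeasurableSpace Y]
    [OpensMeasurableSpace Z] [IsFiniteMeasure μ] {K : ℝ≥0} (hK : 0 < K)
    (hπ : LipschitzWith K π) (hfiber : ∀ᵐ z ∂(μ.map π), μz z ((π ⁻¹' {z})ᶜ) = 0)
    (hdis : ∀ s : Set Y, MeasurableSet s → μ s = ∫⁻ z, μz z s ∂(μ.map π))
    {A : Set Y} (hA : MeasurableSet A) {a b r : ℝ} (hr : 0 < r)
    (hAa : A ⊆ ballDecaySet (fun y => μz (π y)) a r) {y : Y}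
    (hcob : IsCoboundedUnder (· ≥ ·) (𝓝[>] 0) (dimQuotient μ y))
    (hdens : ∀ᶠ ρ in 𝓝[>] 0,
      0 < μ (closedBall y ρ) ∧ μ (closedBall y ρ) ≤ 2 * μ (closedBall y ρ ∩ A))
    (hbase : ∀ᶠ t in 𝓝[>] 0, μ.map π (closedBall (π y) t) ≤ ENNReal.ofReal (t ^ b)) :
    a + b ≤ lowerPointwiseDim μ y := by
  have hKρ : Tendsto (fun ρ => (K : ℝ) * ρ) (𝓝[>] 0) (𝓝[>] 0) := by
    refine tendsto_nhdsWithin_iff.2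
      ⟨?_, eventually_mem_nhdsWithin.mono fun ρ hρ => mul_pos (NNReal.coe_pos.2 hK) hρ⟩
    simpa using ((continuous_const_mul (K : ℝ)).tendsto 0).mono_left nhdsWithin_le_nhds
  refine le_lowerPointwiseDim_of_eventually_le_mul_rpow hcob (C := 2 * 2 ^ a * K ^ b)
    (by positivity) ?_
  filter_upwards [hdens, hKρ.eventually hbase, Ioo_mem_nhdsGT (half_pos hr)]
    with ρ ⟨hpos, hle⟩ hρb ⟨hρ, hρr⟩
  refine ⟨hpos, ?_⟩
  calc μ (closedBall y ρ) ≤ 2 * μ (closedBall y ρ ∩ A) := hle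
    _ ≤ 2 * (ENNReal.ofReal ((2 * ρ) ^ a) * ENNReal.ofReal (((K : ℝ) * ρ) ^ b)) := by
        gcongr
        refine (measure_closedBall_inter_le_mul_map hπ hfiber hdis hA
          (fun y' hy' => hAa hy' _ ⟨by linarith, by linarith⟩) y).trans ?_
        gcongr
    _ = ENNReal.ofReal (2 * 2 ^ a * K ^ b * ρ ^ (a + b)) := by
        rw [← ENNReal.ofReal_ofNat 2, ← ENNReal.ofReal_mul (by positivity),
          ← ENNReal.ofReal_mul (by positivity), Real.mul_rpow (by positivity) hρ.le,
          Real.mul_rpow (by positivity) hρ.le, Real.rpow_add hρ]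
        ring_nf

end Disintegration

theorem lowerDim_superadditive_besicovitch_general
    {Y Z : Type*}
    [MetricSpace Y] [TopologicalSpace.SeparableSpace Y]
    [MeasurableSpace Y] [BorelSpace Y] [HasBesicovitchCovering Y]
    [MetricSpace Z]
    [MeasurableSpace Z] [BorelSpace Z]
    (π : Y → Z) (K : NNReal) (hπ : LipschitzWith K π)
    (μ : Measure Y) [IsProbabilityMeasure μ]
    (μz : Z → Measure Y)
    (hfam : ∀ s : Set Y, MeasurableSet s → Measurable fun z => μz z s)
    (hprob : ∀ z, IsProbabilityMeasure (μz z))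
    (hfiber : ∀ᵐ z ∂(μ.map π), μz z ((π ⁻¹' {z})ᶜ) = 0)
    (hdis : ∀ s : Set Y, MeasurableSet s → μ s = ∫⁻ z, μz z s ∂(μ.map π))
    (γ : ℝ)
    (δ : Z → ℝ)
    (hi : ∀ᵐ y ∂μ, γ ≤ lowerPointwiseDim (μz (π y)) y)
    (hii : ∀ᵐ y ∂μ, δ (π y) ≤ lowerPointwiseDim (μ.map π) (π y)) :
    ∀ᵐ y ∂μ, γ + δ (π y) ≤ lowerPointwiseDim μ y := by
  have hπm : Measurable π := hπ.continuous.measurable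
  have : IsProbabilityMeasure (μ.map π) := Measure.isProbabilityMeasure_map hπm.aemeasurable
  have hA (a r : ℝ) : MeasurableSet (ballDecaySet (fun y => μz (π y)) a r) :=
    measurableSet_ballDecaySet (measurable_measure_closedBall_comp hπm hfam hprob) a r
  suffices h : ∀ ε > 0, ∀ᵐ y ∂μ, γ + δ (π y) - 2 * ε ≤ lowerPointwiseDim μ y by
    filter_upwards [ae_all_iff.2 fun n : ℕ => h (1 / (n + 1)) Nat.one_div_pos_of_nat] with y hy
    have hlim : Tendsto (fun n : ℕ => γ + δ (π y) - 2 * (1 / ((n : ℝ) + 1))) atTop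
        (𝓝 (γ + δ (π y))) := by
      simpa using (tendsto_const_nhds (x := γ + δ (π y))).sub
        (tendsto_one_div_add_atTop_nhds_zero_nat.const_mul (2 : ℝ))
    exact le_of_tendsto' hlim hy
  intro ε hε
  filter_upwards [hi, hii, ae_isCoboundedUnder_dimQuotient μ, ae_all_iff.2 fun m : ℕ =>
    ae_eventually_measure_closedBall_le_two_mul_inter μ (hA (γ - ε) (1 / (m + 1)))]
    with y hyi hyii hcob hdens
  have := hprob (π y)
  obtain ⟨m, hm⟩ := exists_mem_ballDecaySet (κ := fun y => μz (π y)) (a := γ - ε) (by linarith)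
  have := add_le_lowerPointwiseDim_of_subset_ballDecaySet (by positivity)
    (hπ.weaken (le_add_of_nonneg_right zero_le_one)) hfiber hdis (hA _ _) Nat.one_div_pos_of_nat
    subset_rfl hcob (hdens m hm)
    (eventually_measure_closedBall_le_rpow (by linarith : δ (π y) - ε < _))
  linarith

/-- Let `Y` be a complete separable metric space with the Besicovitch
covering property, `Z` a complete separable metric space, `π : Y → Z` Lipschitz, `μ` a
Borel probability measure on `Y`, `ν = π_*μ` and `(μz z)` a disintegration of `μ` over
`ν` along `π`.  If for `μ`-a.e. `y` the lower pointwise dimension of `μz (π y)` at `y`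
is `≥ γ` and the lower pointwise dimension of `ν` at `π y` is `≥ δ (π y)`, then for
`μ`-a.e. `y` the lower pointwise dimension of `μ` at `y` is `≥ γ + δ (π y)`. -/
theorem lowerDim_superadditive_besicovitch
    {Y Z : Type*}
    [MetricSpace Y] [CompleteSpace Y] [TopologicalSpace.SeparableSpace Y]
    [MeasurableSpace Y] [BorelSpace Y] [HasBesicovitchCovering Y]
    [MetricSpace Z] [CompleteSpace Z] [TopologicalSpace.SeparableSpace Z]
    [MeasurableSpace Z] [BorelSpace Z]
    (π : Y → Z) (K : NNReal) (hπ : LipschitzWith K π)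
    (μ : Measure Y) [IsProbabilityMeasure μ]
    (μz : Z → Measure Y)
    (hfam : ∀ s : Set Y, MeasurableSet s → Measurable fun z => μz z s)
    (hprob : ∀ z, IsProbabilityMeasure (μz z))
    (hfiber : ∀ᵐ z ∂(μ.map π), μz z ((π ⁻¹' {z})ᶜ) = 0)
    (hdis : ∀ s : Set Y, MeasurableSet s → μ s = ∫⁻ z, μz z s ∂(μ.map π))
    (γ : ℝ) (hγ : 0 ≤ γ)
    (δ : Z → ℝ) (hδm : Measurable δ) (hδ0 : ∀ z, 0 ≤ δ z)
    (hi : ∀ᵐ y ∂μ, γ ≤ lowerPointwiseDim (μz (π y)) y)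
    (hii : ∀ᵐ y ∂μ, δ (π y) ≤ lowerPointwiseDim (μ.map π) (π y)) :
    ∀ᵐ y ∂μ, γ + δ (π y) ≤ lowerPointwiseDim μ y :=
  lowerDim_superadditive_besicovitch_general π K hπ μ μz hfam hprob hfiber hdis γ δ hi hii
end

section
/- Let Y be a complete separable metric space satisfying the Besicovitch covering property, Z a standard Borel space, and π : Y → Z a Borel measurable map. Let μ be a Borel probability measure on Y, let ν = π_*μ be its push-forward, and let (μ_z)_{z∈Z} be a disintegration of μ over ν along π. Assume there exists a constant γ ≥ 0 such that for μ-almost every y ∈ Y the lower pointwise dimension of μ_{π(y)} at y is ≥ γ. Then for μ-almost every y ∈ Y, the lower pointwise dimension of μ at y is ≥ γ. -/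
open MeasureTheory Filter Topology

/-!
Fix `b < γ`. By Besicovitch's differentiation theorem, at `μ_z`-almost every point the ratio
`μ(B(y,ρ)) / μ_z(B(y,ρ))` stays bounded as `ρ → 0`; the disintegration transfers this to
`μ`-almost every `y` with `z = π y`. Hence `μ(B(y,ρ)) ≤ K μ_{π y}(B(y,2ρ)) ≤ K (2ρ)^b` for small
`ρ`, i.e. `log μ(B(y,ρ)) / log ρ ≥ b - o(1)`.

Since `liminf` in `ℝ` is `0` for a sequence that is not bounded above, one also needs that
`log μ(B(y,ρ)) / log ρ` does not tend to `+∞`, i.e. that `μ(B(y,ρ))` is not eventually below `ρ^n`.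
The Besicovitch property makes the space doubling (a large separated set in a ball would be a
satellite configuration), and covering a ball by `C^k` balls of radius `2^-k R` shows that the
points where `μ(B(y,ρ)) ≤ ρ^n` at all small scales form a null set once `2^n > C`.
-/

open Metric ProbabilityTheory
open scoped NNReal ENNReal

namespace Besicovitch

variable {Y : Type*} [MetricSpace Y] {N : ℕ} {τ : ℝ}

theorem card_lt_of_isEmpty_satelliteConfig (hτ : 1 ≤ τ) (hN : IsEmpty (SatelliteConfig Y N τ))
    {c : Y} {r : ℝ} (hr : 0 < r) {s : Finset Y} (hs : ∀ a ∈ s, r ≤ dist a c ∧ dist a c ≤ 2 * r)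
    (hsep : (s : Set Y).Pairwise fun a b => r ≤ dist a b) : s.card < N := by
  by_contra! hNs
  -- With all radii equal to `r`, `N` points of `s` followed by `c` form a satellite configuration.
  let e : Fin N ↪ s := (Fin.castLEEmb hNs).trans s.equivFin.symm.toEmbedding
  let p : Fin (N + 1) → Y := Fin.lastCases c fun i => e i
  have hp_last : ∀ i, r ≤ dist (p (Fin.castSucc i)) (p (Fin.last N)) ∧
      dist (p (Fin.castSucc i)) (p (Fin.last N)) ≤ 2 * r := by
    intro i
    simpa [p] using hs _ (e i).2
  have hp_sep : Pairwise fun i j => r ≤ dist (p i) (p j) := by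
    intro i j hij
    induction i using Fin.lastCases with
    | last =>
      induction j using Fin.lastCases with
      | last => exact absurd rfl hij
      | cast j => rw [dist_comm]; exact (hp_last j).1
    | cast i =>
      induction j using Fin.lastCases with
      | last => exact (hp_last i).1
      | cast j =>
        simp only [p, Fin.lastCases_castSucc]
        refine hsep (e i).2 (e j).2 fun h => hij ?_
        rw [e.injective (Subtype.ext h)]
  have hτr : r ≤ τ * r := le_mul_of_one_le_left hr.le hτ
  refine hN.false ⟨p, fun _ => r, fun _ => hr, fun i j hij => Or.inl ⟨hp_sep hij, hτr⟩,
    fun i hi => ⟨hp_sep hi.ne, hτr⟩, fun i hi => ?_⟩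
  obtain ⟨i, rfl⟩ := Fin.exists_castSucc_eq.2 hi.ne
  linarith [(hp_last i).2]

theorem card_le_of_subset_closedBall (hτ : 1 ≤ τ) (hN : IsEmpty (SatelliteConfig Y N τ))
    {x : Y} {r : ℝ} (hr : 0 < r) {s : Finset Y} (hs : ∀ a ∈ s, dist a x ≤ 2 * r)
    (hsep : (s : Set Y).Pairwise fun a b => r ≤ dist a b) : s.card ≤ 2 * N := by
  classical
  -- The points at distance `≥ r` from `x` are handled with centre `x`, the others with centre
  -- any one of them.
  set far := s.filter fun a => r ≤ dist a x
  set near := s.filter fun a => ¬ r ≤ dist a x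
  have hfar : far.card < N :=
    card_lt_of_isEmpty_satelliteConfig hτ hN hr
      (fun a ha => ⟨(Finset.mem_filter.1 ha).2, hs a (Finset.mem_filter.1 ha).1⟩)
      (hsep.mono (Finset.coe_subset.2 (Finset.filter_subset _ _)))
  have hnear : near.card ≤ N := by
    rcases near.eq_empty_or_nonempty with h | ⟨a₀, ha₀⟩
    · simp [h]
    have ha₀' := Finset.mem_filter.1 ha₀
    have herase : (near.erase a₀).card < N := by
      refine card_lt_of_isEmpty_satelliteConfig (c := a₀) hτ hN hr (fun a ha => ?_)
        (hsep.mono (fun a ha => (Finset.mem_filter.1 (Finset.mem_of_mem_erase ha)).1))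
      have ha' := Finset.mem_erase.1 ha
      have ha'' := Finset.mem_filter.1 ha'.2
      refine ⟨hsep ha''.1 ha₀'.1 ha'.1, ?_⟩
      linarith [dist_triangle_right a a₀ x, ha''.2, ha₀'.2]
    rw [← Finset.card_erase_add_one ha₀]
    omega
  have hsum : far.card + near.card = s.card := Finset.card_filter_add_card_filter_not _
  omega

theorem packingNumber_closedBall_two_mul_le (hτ : 1 ≤ τ) (hN : IsEmpty (SatelliteConfig Y N τ))
    (x : Y) {r : ℝ≥0} (hr : 0 < r) : packingNumber r (closedBall x (2 * r)) ≤ 2 * N := by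
  refine iSup_le fun s => iSup_le fun hs => iSup_le fun hsep => ?_
  by_contra! hlt
  obtain ⟨t, hts, htcard⟩ := Set.exists_subset_encard_eq (Order.add_one_le_of_lt hlt)
  have htfin : t.Finite := Set.finite_of_encard_eq_coe (k := 2 * N + 1) (by simpa using htcard)
  have hcard := card_le_of_subset_closedBall hτ hN (x := x) (s := htfin.toFinset)
    (NNReal.coe_pos.2 hr) (fun a ha => mem_closedBall.1 (hs (hts (htfin.mem_toFinset.1 ha))))
    (fun a ha b hb hab => ?_)
  · rw [htfin.encard_eq_coe_toFinset_card] at htcard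
    norm_cast at htcard
    omega
  · have : (r : ℝ≥0∞) < edist a b :=
      hsep (hts (htfin.mem_toFinset.1 ha)) (hts (htfin.mem_toFinset.1 hb)) hab
    rw [edist_nndist, ENNReal.coe_lt_coe, ← NNReal.coe_lt_coe, coe_nndist] at this
    exact this.le

end Besicovitch

def HasDoublingConstant (Y : Type*) [PseudoMetricSpace Y] (C : ℕ) : Prop :=
  ∀ (x : Y) (r : ℝ), 0 < r →
    ∃ F : Finset Y, F.card ≤ C ∧ closedBall x (2 * r) ⊆ ⋃ p ∈ F, closedBall p r

theorem HasBesicovitchCovering.exists_hasDoublingConstant (Y : Type*) [MetricSpace Y]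
    [HasBesicovitchCovering Y] : ∃ C, HasDoublingConstant Y C := by
  obtain ⟨N, τ, hτ, hN⟩ := HasBesicovitchCovering.no_satelliteConfig (α := Y)
  refine ⟨2 * N, fun x r hr => ?_⟩
  lift r to ℝ≥0 using hr.le
  have hcover : coveringNumber r (closedBall x (2 * r)) ≤ 2 * N :=
    (coveringNumber_le_packingNumber _ _).trans
      (Besicovitch.packingNumber_closedBall_two_mul_le hτ.le hN x (NNReal.coe_pos.1 hr))
  obtain ⟨S, -, hSfin, hScover, hScard⟩ :=
    exists_set_encard_eq_coveringNumber (ne_top_of_le_ne_top (ENat.natCast_ne_top (2 * N)) hcover)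
  refine ⟨hSfin.toFinset, ?_, ?_⟩
  · rw [← hScard, hSfin.encard_eq_coe_toFinset_card] at hcover
    exact_mod_cast hcover
  · simpa using isCover_iff_subset_iUnion_closedBall.1 hScover

theorem measure_inter_closedBall_le {Y : Type*} [PseudoMetricSpace Y] [MeasurableSpace Y]
    {μ : Measure Y} {E : Set Y} {a : ℝ≥0∞} (p : Y) {δ : ℝ}
    (hE : ∀ z ∈ E, μ (closedBall z (2 * δ)) ≤ a) : μ (E ∩ closedBall p δ) ≤ a := by
  rcases (E ∩ closedBall p δ).eq_empty_or_nonempty with h | ⟨z, hzE, hzp⟩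
  · simp [h]
  refine (measure_mono fun w hw => ?_).trans (hE z hzE)
  have := dist_triangle_right w z p
  rw [mem_closedBall] at hzp ⊢
  linarith [mem_closedBall.1 hw.2]

namespace HasDoublingConstant

variable {Y : Type*} [PseudoMetricSpace Y] {C : ℕ}

theorem exists_finset_closedBall_pow_subset (hC : HasDoublingConstant Y C) (k : ℕ) (x : Y)
    {r : ℝ} (hr : 0 < r) :
    ∃ F : Finset Y, F.card ≤ C ^ k ∧ closedBall x (2 ^ k * r) ⊆ ⋃ p ∈ F, closedBall p r := by
  classical
  induction k generalizing x with
  | zero => exact ⟨{x}, by simp, by simp⟩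
  | succ k ih =>
    obtain ⟨F, hFcard, hFcover⟩ := hC x (2 ^ k * r) (by positivity)
    choose! G hGcard hGcover using ih
    refine ⟨F.biUnion G, ?_, fun y hy => ?_⟩
    · calc (F.biUnion G).card ≤ ∑ p ∈ F, (G p).card := Finset.card_biUnion_le
        _ ≤ ∑ _p ∈ F, C ^ k := Finset.sum_le_sum fun p _ => hGcard p
        _ = F.card * C ^ k := by rw [Finset.sum_const, smul_eq_mul]
        _ ≤ C ^ (k + 1) := by rw [pow_succ']; gcongr
    · rw [pow_succ', mul_assoc] at hy
      obtain ⟨p, hp, hyp⟩ := Set.mem_iUnion₂.1 (hFcover hy)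
      obtain ⟨q, hq, hyq⟩ := Set.mem_iUnion₂.1 (hGcover p hyp)
      exact Set.mem_iUnion₂.2 ⟨q, Finset.mem_biUnion.2 ⟨p, hp, hq⟩, hyq⟩

variable [MeasurableSpace Y]

theorem measure_setOf_measure_closedBall_le_pow_eq_zero (hC : HasDoublingConstant Y C) {n : ℕ}
    (hn : C < 2 ^ n) (μ : Measure Y) (x : Y) {R r : ℝ} (hR : 0 < R) (hr : 0 < r) :
    μ {y ∈ closedBall x R |
      ∀ ρ ∈ Set.Ioo 0 r, μ (closedBall y ρ) ≤ ENNReal.ofReal (ρ ^ n)} = 0 := by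
  set E := {y ∈ closedBall x R | ∀ ρ ∈ Set.Ioo 0 r, μ (closedBall y ρ) ≤ ENNReal.ofReal (ρ ^ n)}
  have hbound (k : ℕ) (hk : 2 * (R / 2 ^ k) < r) :
      μ E ≤ ENNReal.ofReal (C ^ k * (2 * (R / 2 ^ k)) ^ n) := by
    obtain ⟨F, hFcard, hFcover⟩ :=
      hC.exists_finset_closedBall_pow_subset k x (r := R / 2 ^ k) (by positivity)
    rw [mul_div_cancel₀ _ (by positivity)] at hFcover
    calc μ E ≤ μ (⋃ p ∈ F, E ∩ closedBall p (R / 2 ^ k)) := measure_mono fun y hy => by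
            obtain ⟨p, hp, hyp⟩ := Set.mem_iUnion₂.1 (hFcover hy.1)
            exact Set.mem_iUnion₂.2 ⟨p, hp, hy, hyp⟩
      _ ≤ ∑ p ∈ F, μ (E ∩ closedBall p (R / 2 ^ k)) := measure_biUnion_finset_le _ _
      _ ≤ ∑ _p ∈ F, ENNReal.ofReal ((2 * (R / 2 ^ k)) ^ n) :=
          Finset.sum_le_sum fun p _ =>
            measure_inter_closedBall_le p fun z hz => hz.2 _ ⟨by positivity, hk⟩
      _ = F.card * ENNReal.ofReal ((2 * (R / 2 ^ k)) ^ n) := by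
          rw [Finset.sum_const, nsmul_eq_mul]
      _ ≤ (C ^ k : ℕ) * ENNReal.ofReal ((2 * (R / 2 ^ k)) ^ n) := by
          gcongr
      _ = ENNReal.ofReal (C ^ k * (2 * (R / 2 ^ k)) ^ n) := by
          rw [ENNReal.ofReal_mul (by positivity), ← Nat.cast_pow, ENNReal.ofReal_natCast]
  have hradius : Tendsto (fun k : ℕ => 2 * (R / 2 ^ k)) atTop (𝓝 0) := by
    simpa using ((tendsto_pow_atTop_atTop_of_one_lt one_lt_two).const_div_atTop R).const_mul 2
  have hbound_lim : Tendsto (fun k : ℕ => C ^ k * (2 * (R / 2 ^ k)) ^ n) atTop (𝓝 0) := by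
    have hq : (C : ℝ) / 2 ^ n < 1 := by
      rw [div_lt_one (by positivity)]
      exact_mod_cast hn
    have := (tendsto_pow_atTop_nhds_zero_of_lt_one (by positivity) hq).const_mul ((2 * R) ^ n)
    rw [mul_zero] at this
    refine this.congr fun k => ?_
    rw [mul_div_assoc', div_pow, div_pow, ← pow_mul, ← pow_mul, mul_comm n k]
    field_simp
  have := ge_of_tendsto (ENNReal.tendsto_ofReal hbound_lim)
    ((hradius.eventually (gt_mem_nhds hr)).mono hbound)
  simpa using this

theorem ae_frequently_pow_lt_measure_closedBall (hC : HasDoublingConstant Y C) {n : ℕ}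
    (hn : C < 2 ^ n) (μ : Measure Y) :
    ∀ᵐ y ∂μ, ∃ᶠ ρ in 𝓝[>] 0, ENNReal.ofReal (ρ ^ n) < μ (closedBall y ρ) := by
  rcases isEmpty_or_nonempty Y with _ | ⟨⟨x⟩⟩
  · exact Eventually.of_forall fun y => isEmptyElim y
  rw [ae_iff]
  refine measure_mono_null (fun y hy => ?_) (measure_iUnion_null fun m : ℕ =>
    hC.measure_setOf_measure_closedBall_le_pow_eq_zero hn μ x (R := m + 1) (r := (m + 1)⁻¹)
      (by positivity) (by positivity))
  simp only [Set.mem_ofPred_eq, not_frequently, not_lt] at hy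
  obtain ⟨ε, hε, hεy⟩ := mem_nhdsGT_iff_exists_Ioo_subset.1 hy
  obtain ⟨m, hm⟩ := exists_nat_ge (max (dist y x) ε⁻¹)
  have hm' := max_le_iff.1 hm
  refine Set.mem_iUnion.2 ⟨m, mem_closedBall.2 (by linarith), fun ρ hρ => hεy ⟨hρ.1, ?_⟩⟩
  exact hρ.2.trans_le (inv_le_of_inv_le₀ hε (by linarith))

end HasDoublingConstant

section PointwiseDimension

variable {W : Type*} [MetricSpace W] [MeasurableSpace W] {m : Measure W} {y : W}

theorem eventually_nonneg_log_measure_closedBall_div_log [IsZeroOrProbabilityMeasure m] (y : W) :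
    ∀ᶠ ρ in 𝓝[>] 0, 0 ≤ Real.log (m (closedBall y ρ)).toReal / Real.log ρ := by
  filter_upwards [Ioo_mem_nhdsGT one_pos] with ρ hρ
  exact div_nonneg_of_nonpos (Real.log_nonpos ENNReal.toReal_nonneg measureReal_le_one)
    (Real.log_nonpos hρ.1.le hρ.2.le)

theorem eventually_measure_closedBall_le_rpow_of_lt_lowerPointwiseDim_s8
    [IsZeroOrProbabilityMeasure m] {b : ℝ} (hb : b < lowerPointwiseDim m y) :
    ∀ᶠ ρ in 𝓝[>] 0, (m (closedBall y ρ)).toReal ≤ ρ ^ b := by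
  have hbdd := isBoundedUnder_of_eventually_ge (eventually_nonneg_log_measure_closedBall_div_log
    (m := m) y)
  filter_upwards [eventually_lt_of_lt_liminf hb hbdd, Ioo_mem_nhdsGT one_pos] with ρ hbρ hρ
  rcases ENNReal.toReal_nonneg.eq_or_lt with h | h
  · exact h ▸ Real.rpow_nonneg hρ.1.le b
  · rw [Real.le_rpow_iff_log_le h hρ.1]
    exact ((lt_div_iff_of_neg (Real.log_neg hρ.1 hρ.2)).1 hbρ).le

theorem le_lowerPointwiseDim_of_forall_lt [IsFiniteMeasure m] {γ : ℝ}
    (hpos : ∀ ρ, 0 < ρ → 0 < m (closedBall y ρ))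
    (hfreq : ∃ n : ℕ, ∃ᶠ ρ in 𝓝[>] 0, ENNReal.ofReal (ρ ^ n) < m (closedBall y ρ))
    (hle : ∀ b < γ, ∃ c : ℝ, ∀ᶠ ρ in 𝓝[>] 0, (m (closedBall y ρ)).toReal ≤ c * ρ ^ b) :
    γ ≤ lowerPointwiseDim m y := by
  have hpos' (ρ : ℝ) (hρ : 0 < ρ) : 0 < (m (closedBall y ρ)).toReal :=
    ENNReal.toReal_pos (hpos ρ hρ).ne' (measure_ne_top _ _)
  obtain ⟨n, hn⟩ := hfreq
  have hcobdd : IsCoboundedUnder (· ≥ ·) (𝓝[>] 0)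
      (fun ρ => Real.log (m (closedBall y ρ)).toReal / Real.log ρ) := by
    refine IsCoboundedUnder.of_frequently_le (a := (n : ℝ)) ?_
    refine (hn.and_eventually (Ioo_mem_nhdsGT one_pos)).mono fun ρ ⟨hlt, hρ⟩ => ?_
    rw [div_le_iff_of_neg (Real.log_neg hρ.1 hρ.2), ← Real.log_pow]
    exact Real.log_le_log (pow_pos hρ.1 n)
      ((ENNReal.ofReal_lt_iff_lt_toReal (pow_nonneg hρ.1.le n) (measure_ne_top _ _)).1 hlt).le
  refine le_of_forall_lt_imp_le_of_dense fun b' hb' => ?_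
  obtain ⟨b, hb'b, hbγ⟩ := exists_between hb'
  obtain ⟨c, hc⟩ := hle b hbγ
  have hlim : Tendsto (fun ρ => Real.log c / Real.log ρ) (𝓝[>] 0) (𝓝 0) :=
    tendsto_const_nhds.div_atBot Real.tendsto_log_nhdsGT_zero
  refine le_liminf_of_le hcobdd ?_
  filter_upwards [hc, hlim.eventually (lt_mem_nhds (sub_neg.2 hb'b)), Ioo_mem_nhdsGT one_pos]
    with ρ hcρ hsmall hρ
  have hlogρ := Real.log_neg hρ.1 hρ.2
  have hc0 : 0 < c :=
    pos_of_mul_pos_left ((hpos' ρ hρ.1).trans_le hcρ) (Real.rpow_nonneg hρ.1.le b)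
  have hlogm : Real.log (m (closedBall y ρ)).toReal ≤ Real.log c + b * Real.log ρ := by
    have := Real.log_le_log (hpos' ρ hρ.1) hcρ
    rwa [Real.log_mul hc0.ne' (Real.rpow_pos_of_pos hρ.1 b).ne', Real.log_rpow hρ.1] at this
  rw [le_div_iff_of_neg hlogρ]
  linarith [(lt_div_iff_of_neg hlogρ).1 hsmall]

theorem le_lowerPointwiseDim_of_eventually_le_mul {m' : Measure W} [IsFiniteMeasure m]
    [IsZeroOrProbabilityMeasure m'] {γ : ℝ}
    (hpos : ∀ ρ, 0 < ρ → 0 < m (closedBall y ρ))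
    (hfreq : ∃ n : ℕ, ∃ᶠ ρ in 𝓝[>] 0, ENNReal.ofReal (ρ ^ n) < m (closedBall y ρ))
    (hcomp : ∃ K : ℕ, ∀ᶠ ρ in 𝓝[>] 0, m (closedBall y ρ) ≤ K * m' (closedBall y (2 * ρ)))
    (hγ : γ ≤ lowerPointwiseDim m' y) :
    γ ≤ lowerPointwiseDim m y := by
  obtain ⟨K, hK⟩ := hcomp
  refine le_lowerPointwiseDim_of_forall_lt hpos hfreq fun b hb => ⟨K * 2 ^ b, ?_⟩
  have hdouble : Tendsto (fun ρ : ℝ => 2 * ρ) (𝓝[>] 0) (𝓝[>] 0) := by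
    refine tendsto_nhdsWithin_iff.2 ⟨?_, eventually_mem_nhdsWithin.mono fun ρ hρ => ?_⟩
    · simpa using ((continuous_const_mul (2 : ℝ)).tendsto 0).mono_left nhdsWithin_le_nhds
    · exact mul_pos two_pos hρ.out
  filter_upwards [hK, hdouble.eventually
    (eventually_measure_closedBall_le_rpow_of_lt_lowerPointwiseDim_s8 (hb.trans_le hγ)),
    eventually_mem_nhdsWithin] with ρ hKρ hρ' hρ
  calc (m (closedBall y ρ)).toReal ≤ K * (m' (closedBall y (2 * ρ))).toReal := by
        simpa using ENNReal.toReal_mono (by finiteness) hKρ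
    _ ≤ K * (2 * ρ) ^ b := by gcongr
    _ = K * 2 ^ b * ρ ^ b := by rw [Real.mul_rpow zero_le_two (le_of_lt hρ), mul_assoc]

theorem ae_forall_measure_closedBall_pos [HereditarilyLindelofSpace W] (μ : Measure W) :
    ∀ᵐ y ∂μ, ∀ ρ, 0 < ρ → 0 < μ (closedBall y ρ) := by
  filter_upwards [μ.support_mem_ae] with y hy ρ hρ
  exact (μ.mem_support_iff_forall y).1 hy _ (closedBall_mem_nhds y hρ)

end PointwiseDimension

theorem Besicovitch.ae_exists_measure_closedBall_le_mul {Y : Type*} [MetricSpace Y]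
    [SecondCountableTopology Y] [MeasurableSpace Y] [BorelSpace Y] [HasBesicovitchCovering Y]
    (μ ν : Measure Y) [IsLocallyFiniteMeasure μ] [IsLocallyFiniteMeasure ν] :
    ∀ᵐ y ∂ν, ∃ K : ℕ, ∀ᶠ ρ in 𝓝[>] 0, μ (closedBall y ρ) ≤ K * ν (closedBall y ρ) := by
  filter_upwards [Besicovitch.ae_tendsto_rnDeriv μ ν, μ.rnDeriv_lt_top ν] with y hy hlt
  obtain ⟨K, hK⟩ := ENNReal.exists_nat_gt hlt.ne
  refine ⟨K, (hy.eventually_lt_const hK).mono fun ρ hρ => ?_⟩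
  exact (ENNReal.div_le_iff_le_mul (Or.inr (ENNReal.natCast_ne_top K))
    (Or.inr (zero_le.trans_lt hK).ne')).1 hρ.le

theorem ProbabilityTheory.Kernel.measurable_measure_closedBall_comp {Y Z : Type*}
    [MetricSpace Y] [SecondCountableTopology Y] [MeasurableSpace Y] [OpensMeasurableSpace Y]
    [MeasurableSpace Z] (κ : Kernel Z Y) [IsSFiniteKernel κ] {f : Y → Z} (hf : Measurable f)
    (r : ℝ) : Measurable fun y => κ (f y) (closedBall y r) := by
  have hball : MeasurableSet {p : (Z × Y) × Y | dist p.2 p.1.2 ≤ r} :=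
    measurableSet_le (by fun_prop) measurable_const
  exact ((κ.comap Prod.fst measurable_fst).measurable_kernel_prodMk_left hball).comp
    (hf.prodMk measurable_id)

theorem ae_of_forall_ae_fiber {Y Z : Type*} [MeasurableSpace Y] [MeasurableSpace Z]
    {π : Y → Z} {μ : Measure Y} {μz : Z → Measure Y}
    (hfiber : ∀ᵐ z ∂(μ.map π), μz z ((π ⁻¹' {z})ᶜ) = 0)
    (hdis : ∀ s : Set Y, MeasurableSet s → μ s = ∫⁻ z, μz z s ∂(μ.map π))
    {p : Z → Y → Prop} (hp : MeasurableSet {y | p (π y) y}) (h : ∀ z, ∀ᵐ y ∂(μz z), p z y) :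
    ∀ᵐ y ∂μ, p (π y) y := by
  rw [ae_iff, show {y | ¬p (π y) y} = {y | p (π y) y}ᶜ from rfl, hdis _ hp.compl]
  refine (lintegral_congr_ae ?_).trans lintegral_zero
  filter_upwards [hfiber] with z hz
  refine measure_mono_null (fun y hy => ?_) (measure_union_null (ae_iff.1 (h z)) hz)
  by_cases hyz : π y = z
  · exact Or.inl (hyz ▸ hy)
  · exact Or.inr hyz

theorem eventually_le_comp_two_mul_of_rat {α : Type*} [Preorder α] {f g : ℝ → α}
    (hf : Monotone f) (hg : Monotone g) {ε : ℚ} (hε : 0 < ε)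
    (h : ∀ q : ℚ, 0 < q → q < ε → f q ≤ g q) : ∀ᶠ ρ in 𝓝[>] (0 : ℝ), f ρ ≤ g (2 * ρ) := by
  filter_upwards [Ioo_mem_nhdsGT (show (0 : ℝ) < ε / 2 by positivity)] with ρ hρ
  obtain ⟨q, hρq, hq2ρ⟩ := exists_rat_btwn (show ρ < 2 * ρ by linarith [hρ.1])
  have hq : (0 : ℝ) < q := hρ.1.trans hρq
  have hqε : (q : ℝ) < ε := by linarith [hρ.2]
  exact (hf hρq.le).trans
    ((h q (by exact_mod_cast hq) (by exact_mod_cast hqε)).trans (hg hq2ρ.le))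

theorem ae_exists_measure_closedBall_le_mul_fiber {Y Z : Type*} [MetricSpace Y]
    [SecondCountableTopology Y] [MeasurableSpace Y] [BorelSpace Y] [HasBesicovitchCovering Y]
    [MeasurableSpace Z] {π : Y → Z} (hπ : Measurable π) {μ : Measure Y} [IsFiniteMeasure μ]
    {κ : Kernel Z Y} [IsFiniteKernel κ]
    (hfiber : ∀ᵐ z ∂(μ.map π), κ z ((π ⁻¹' {z})ᶜ) = 0)
    (hdis : ∀ s : Set Y, MeasurableSet s → μ s = ∫⁻ z, κ z s ∂(μ.map π)) :
    ∀ᵐ y ∂μ, ∃ K : ℕ, ∀ᶠ ρ in 𝓝[>] 0,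
      μ (closedBall y ρ) ≤ K * κ (π y) (closedBall y (2 * ρ)) := by
  -- Only rational radii are tested, so that the set where the comparison holds is measurable.
  have hrat : ∀ᵐ y ∂μ, ∃ K : ℕ, ∃ ε : ℚ, 0 < ε ∧ ∀ q : ℚ, 0 < q → q < ε →
      μ (closedBall y q) ≤ K * κ (π y) (closedBall y q) := by
    refine ae_of_forall_ae_fiber hfiber hdis (p := fun z y => ∃ K : ℕ, ∃ ε : ℚ, 0 < ε ∧
      ∀ q : ℚ, 0 < q → q < ε → μ (closedBall y q) ≤ K * κ z (closedBall y q)) ?_ fun z => ?_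
    · have hμ (r : ℝ) : Measurable fun y => μ (closedBall y r) := by
        simpa using (Kernel.const Y μ).measurable_measure_closedBall_comp measurable_id r
      have hκ (r : ℝ) : Measurable fun y => κ (π y) (closedBall y r) :=
        κ.measurable_measure_closedBall_comp hπ r
      exact Measurable.setOf <| Measurable.exists fun K => Measurable.exists fun ε =>
        measurable_const.and <| Measurable.forall fun q => measurable_const.imp <|
          measurable_const.imp <| (hμ q).le' ((hκ q).const_mul _)
    · filter_upwards [Besicovitch.ae_exists_measure_closedBall_le_mul μ (κ z)] with y ⟨K, hK⟩
      obtain ⟨ε, hε, hεK⟩ := mem_nhdsGT_iff_exists_Ioo_subset.1 hK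
      obtain ⟨ε', hε', hε'ε⟩ := exists_rat_btwn (Set.mem_Ioi.1 hε)
      refine ⟨K, ε', by exact_mod_cast hε', fun q hq hqε => hεK ⟨by exact_mod_cast hq, ?_⟩⟩
      exact (show (q : ℝ) < ε' by exact_mod_cast hqε).trans hε'ε
  filter_upwards [hrat] with y ⟨K, ε, hε, hK⟩
  exact ⟨K, eventually_le_comp_two_mul_of_rat (f := fun ρ => μ (closedBall y ρ))
    (g := fun ρ => K * κ (π y) (closedBall y ρ)) (fun _ _ h => by dsimp only; gcongr)
    (fun _ _ h => by dsimp only; gcongr) hε hK⟩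

theorem lowerDim_ge_of_fiber_dim_ge_besicovitch_general
    {Y Z : Type*}
    [MetricSpace Y] [TopologicalSpace.SeparableSpace Y]
    [MeasurableSpace Y] [BorelSpace Y] [HasBesicovitchCovering Y]
    [MeasurableSpace Z]
    (π : Y → Z) (hπ : Measurable π)
    (μ : Measure Y) [IsProbabilityMeasure μ]
    (μz : Z → Measure Y)
    (hfam : ∀ s : Set Y, MeasurableSet s → Measurable fun z => μz z s)
    (hprob : ∀ z, IsProbabilityMeasure (μz z))
    (hfiber : ∀ᵐ z ∂(μ.map π), μz z ((π ⁻¹' {z})ᶜ) = 0)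
    (hdis : ∀ s : Set Y, MeasurableSet s → μ s = ∫⁻ z, μz z s ∂(μ.map π))
    (γ : ℝ)
    (hi : ∀ᵐ y ∂μ, γ ≤ lowerPointwiseDim (μz (π y)) y) :
    ∀ᵐ y ∂μ, γ ≤ lowerPointwiseDim μ y := by
  let κ : Kernel Z Y := ⟨μz, Measure.measurable_of_measurable_coe _ hfam⟩
  have : IsMarkovKernel κ := ⟨hprob⟩
  obtain ⟨C, hC⟩ := HasBesicovitchCovering.exists_hasDoublingConstant Y
  filter_upwards [hi, ae_forall_measure_closedBall_pos μ,
    hC.ae_frequently_pow_lt_measure_closedBall Nat.lt_two_pow_self μ,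
    ae_exists_measure_closedBall_le_mul_fiber (κ := κ) hπ hfiber hdis]
    with y hy hpos hfreq hcomp
  have := hprob (π y)
  exact le_lowerPointwiseDim_of_eventually_le_mul hpos ⟨C, hfreq⟩ hcomp hy

/-- Let `Y` be a complete separable metric space with the Besicovitch
covering property, `Z` a standard Borel space, `π : Y → Z` Borel measurable, `μ` a
Borel probability measure on `Y`, `ν = π_*μ` and `(μz z)` a disintegration of `μ` over
`ν` along `π`.  If for `μ`-a.e. `y` the lower pointwise dimension of `μz (π y)` at `y`
is `≥ γ`, then for `μ`-a.e. `y` the lower pointwise dimension of `μ` at `y` is `≥ γ`. -/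
theorem lowerDim_ge_of_fiber_dim_ge_besicovitch
    {Y Z : Type*}
    [MetricSpace Y] [CompleteSpace Y] [TopologicalSpace.SeparableSpace Y]
    [MeasurableSpace Y] [BorelSpace Y] [HasBesicovitchCovering Y]
    [MeasurableSpace Z] [StandardBorelSpace Z]
    (π : Y → Z) (hπ : Measurable π)
    (μ : Measure Y) [IsProbabilityMeasure μ]
    (μz : Z → Measure Y)
    (hfam : ∀ s : Set Y, MeasurableSet s → Measurable fun z => μz z s)
    (hprob : ∀ z, IsProbabilityMeasure (μz z))
    (hfiber : ∀ᵐ z ∂(μ.map π), μz z ((π ⁻¹' {z})ᶜ) = 0)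
    (hdis : ∀ s : Set Y, MeasurableSet s → μ s = ∫⁻ z, μz z s ∂(μ.map π))
    (γ : ℝ) (hγ : 0 ≤ γ)
    (hi : ∀ᵐ y ∂μ, γ ≤ lowerPointwiseDim (μz (π y)) y) :
    ∀ᵐ y ∂μ, γ ≤ lowerPointwiseDim μ y :=
  lowerDim_ge_of_fiber_dim_ge_besicovitch_general π hπ μ μz hfam hprob hfiber hdis γ hi
end

section
/- Let G be a Hausdorff topological group acting on a set X, and let U be a compact symmetric neighbourhood of the identity in G such that for every x ∈ X the only element g ∈ U·U with g·x = x is the identity. Let Σ ⊆ X be a (U·U)-lacunary subset and let K ⊆ G be a compact set. Then there exists an integer m such that for every x ∈ X the set {(g,σ) ∈ K × Σ : g·σ = x} has at most m elements. In particular, for every x ∈ X there is at most one pair (g,σ) ∈ U × Σ with g·σ = x. -/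
open scoped Pointwise

/-! Two points `g • σ = g' • σ'` with `g, g' ∈ U` and `σ, σ' ∈ S` are related by
`g'⁻¹ g ∈ U⁻¹ U`, which by lacunarity fixes `σ` and hence, acting freely, is trivial: so
`(g, σ) ↦ g • σ` is injective on `U × S`, and on every translate `gU × S`. Covering the compact
set `K` by finitely many translates of `U` bounds each fiber over `K × S` by their number. -/

section Lacunary

variable {G X : Type*} [Group G] [MulAction G X]

def IsLacunary (W : Set G) (S : Set X) : Prop :=
  ∀ x ∈ S, ∀ g ∈ W, g • x ∈ S → g • x = x

theorem injOn_smul_prod_of_isLacunary {U : Set G} {S : Set X}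
    (hfree : ∀ x ∈ S, ∀ g ∈ U⁻¹ * U, g • x = x → g = 1) (hlac : IsLacunary (U⁻¹ * U) S) :
    Set.InjOn (fun p : G × X => p.1 • p.2) (U ×ˢ S) := by
  rintro ⟨g, σ⟩ ⟨hg, hσ⟩ ⟨g', σ'⟩ ⟨hg', hσ'⟩ (he : g • σ = g' • σ')
  have hmem : g'⁻¹ * g ∈ U⁻¹ * U := Set.mul_mem_mul (Set.inv_mem_inv.2 hg') hg
  have hmove : (g'⁻¹ * g) • σ = σ' := by rw [mul_smul, he, inv_smul_smul]
  have hfix : (g'⁻¹ * g) • σ = σ := hlac σ hσ _ hmem (hmove ▸ hσ')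
  have hone : g'⁻¹ * g = 1 := hfree σ hσ _ hmem hfix
  exact Prod.ext (inv_mul_eq_one.1 hone).symm (hfix.symm.trans hmove)

theorem Set.InjOn.smul_prod_preimage_mul_left {U : Set G} {S : Set X}
    (hinj : Set.InjOn (fun p : G × X => p.1 • p.2) (U ×ˢ S)) (g : G) :
    Set.InjOn (fun p : G × X => p.1 • p.2) (((g * ·) ⁻¹' U) ×ˢ S) := by
  rintro ⟨h, σ⟩ ⟨hh, hσ⟩ ⟨h', σ'⟩ ⟨hh', hσ'⟩ (he : h • σ = h' • σ')
  have hpair := Prod.ext_iff.1 <| hinj (x₁ := (g * h, σ)) (x₂ := (g * h', σ')) ⟨hh, hσ⟩ ⟨hh', hσ'⟩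
    (show (g * h) • σ = (g * h') • σ' by rw [mul_smul, mul_smul, he])
  exact Prod.ext (mul_left_cancel hpair.1) hpair.2

end Lacunary

theorem Set.encard_le_card_of_subset_biUnion_subsingleton {ι α : Type*} {A : Set α}
    {t : Finset ι} {s : ι → Set α} (hA : A ⊆ ⋃ i ∈ t, s i) (hs : ∀ i ∈ t, (s i).Subsingleton) :
    A.encard ≤ t.card :=
  calc A.encard ≤ (⋃ i ∈ t, s i).encard := Set.encard_le_encard hA
    _ ≤ ∑ i ∈ t, (s i).encard := t.set_encard_biUnion_le s
    _ ≤ ∑ _i ∈ t, 1 := Finset.sum_le_sum fun i hi => Set.encard_le_one_iff_subsingleton.2 (hs i hi)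
    _ = t.card := by simp

theorem card_fiber_le_of_lacunary_general
    {G X : Type*} [Group G] [TopologicalSpace G] [IsTopologicalGroup G]
    [MulAction G X]
    (U : Set G) (hUs : U⁻¹ = U) (hU1 : U ∈ nhds (1 : G))
    (hfree : ∀ (x : X), ∀ g ∈ U * U, g • x = x → g = 1)
    (S : Set X) (hlac : ∀ x' ∈ S, ∀ g ∈ U * U, g • x' ∈ S → g • x' = x')
    (K : Set G) (hK : IsCompact K) :
    (∃ m : ℕ, ∀ x : X,
        ({p : G × X | p.1 ∈ K ∧ p.2 ∈ S ∧ p.1 • p.2 = x}).Finite ∧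
        ({p : G × X | p.1 ∈ K ∧ p.2 ∈ S ∧ p.1 • p.2 = x}).ncard ≤ m) ∧
    (∀ (x : X) (g g' : G) (σ σ' : X), g ∈ U → g' ∈ U → σ ∈ S → σ' ∈ S →
        g • σ = x → g' • σ' = x → g = g' ∧ σ = σ') := by
  have hinj : Set.InjOn (fun p : G × X => p.1 • p.2) (U ×ˢ S) :=
    injOn_smul_prod_of_isLacunary (by rw [hUs]; exact fun x _ => hfree x) (by rwa [hUs])
  refine ⟨?_, fun x g g' σ σ' hg hg' hσ hσ' he he' =>
    Prod.ext_iff.1 (hinj (x₁ := (g, σ)) (x₂ := (g', σ')) ⟨hg, hσ⟩ ⟨hg', hσ'⟩ (he.trans he'.symm))⟩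
  obtain ⟨t, hKt⟩ := compact_covered_by_mul_left_translates hK
    ⟨1, mem_interior_iff_mem_nhds.2 hU1⟩
  refine ⟨t.card, fun x => Set.encard_le_coe_iff_finite_ncard_le.1 <|
    Set.encard_le_card_of_subset_biUnion_subsingleton
      (s := fun g => ((g * ·) ⁻¹' U) ×ˢ S ∩ (fun p : G × X => p.1 • p.2) ⁻¹' {x}) ?_ ?_⟩
  · rintro p ⟨hpK, hpS, hpx⟩
    obtain ⟨g, hg, hpg⟩ := Set.mem_iUnion₂.1 (hKt hpK)
    exact Set.mem_iUnion₂.2 ⟨g, hg, ⟨hpg, hpS⟩, hpx⟩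
  · exact fun g _ p hp q hq =>
      hinj.smul_prod_preimage_mul_left g hp.1 hq.1 (hp.2.trans hq.2.symm)

/-- Let `G` be a Hausdorff topological group acting on a set `X`,
`U` a compact symmetric neighbourhood of the identity such that the only element of
`U·U` fixing some point of `X` is the identity, `S` a `(U·U)`-lacunary subset of `X`
and `K ⊆ G` compact.  Then there is an integer `m` such that for every `x` the set of
pairs `(g,σ) ∈ K × S` with `g • σ = x` is finite with at most `m` elements; in
particular, for every `x` there is at most one pair `(g,σ) ∈ U × S` with `g • σ = x`. -/
theorem card_fiber_le_of_lacunary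
    {G X : Type*} [Group G] [TopologicalSpace G] [IsTopologicalGroup G] [T2Space G]
    [MulAction G X]
    (U : Set G) (hUc : IsCompact U) (hUs : U⁻¹ = U) (hU1 : U ∈ nhds (1 : G))
    (hfree : ∀ (x : X), ∀ g ∈ U * U, g • x = x → g = 1)
    (S : Set X) (hlac : ∀ x' ∈ S, ∀ g ∈ U * U, g • x' ∈ S → g • x' = x')
    (K : Set G) (hK : IsCompact K) :
    (∃ m : ℕ, ∀ x : X,
        ({p : G × X | p.1 ∈ K ∧ p.2 ∈ S ∧ p.1 • p.2 = x}).Finite ∧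
        ({p : G × X | p.1 ∈ K ∧ p.2 ∈ S ∧ p.1 • p.2 = x}).ncard ≤ m) ∧
    (∀ (x : X) (g g' : G) (σ σ' : X), g ∈ U → g' ∈ U → σ ∈ S → σ' ∈ S →
        g • σ = x → g' • σ' = x → g = g' ∧ σ = σ') :=
  card_fiber_le_of_lacunary_general U hUs hU1 hfree S hlac K hK
end
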